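/- arXiv:1101.0469 — 10 statements merged into one kernel-verified Lean document; each statement's English description precedes it below -/
import Mathlib

section
/- Let p be a prime and let C be a nontrivial cyclic subgroup of (ℤ/p)². Then there exists a group homomorphism r : ℤ² → ℤ such that the kernel of the induced homomorphism (ℤ/p)² → ℤ/p obtained from r by reduction modulo p is exactly C, and such that the unique ℝ-linear extension r_ℝ : ℝ² → ℝ of r satisfies |r_ℝ(x₁) − r_ℝ(x₂)| ≤ √(2p) · ‖x₁ − x₂‖ for all x₁, x₂ ∈ ℝ². -/
/-!
By the pigeonhole principle (Thue's lemma) there is a nonzero integer vector `w` with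
`|wᵢ| ≤ √p` that is orthogonal modulo `p` to a generator `g` of `C`. Since `|wᵢ| < p`, `w` stays
nonzero modulo `p`, so `x ↦ w ⬝ᵥ x` is a nonzero functional on the plane `(ℤ/p)²` whose kernel
is a line containing `g`, hence equals `C`. Over `ℝ` this functional is `⟪w, ·⟫`, which is
`‖w‖`-Lipschitz, and `‖w‖² ≤ 2p`.
-/

open Module Matrix

theorem exists_ne_zero_abs_le_dotProduct_eq_zero {ι : Type*} [Fintype ι] {n : ℕ} [NeZero n]
    (g : ι → ZMod n) {k : ℕ} (hk : n < (k + 1) ^ Fintype.card ι) :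
    ∃ w : ι → ℤ, w ≠ 0 ∧ (∀ i, |w i| ≤ k) ∧ (fun i => (w i : ZMod n)) ⬝ᵥ g = 0 := by
  classical
  have hcard : Fintype.card (ZMod n) < Fintype.card (ι → Fin (k + 1)) := by simpa using hk
  obtain ⟨x, y, hxy, hfxy⟩ := Fintype.exists_ne_map_eq_of_card_lt
    (fun x : ι → Fin (k + 1) => (fun i => ((x i : ℕ) : ZMod n)) ⬝ᵥ g) hcard
  refine ⟨fun i => (x i : ℤ) - (y i : ℤ), fun h => hxy (funext fun i => ?_), fun i => ?_, ?_⟩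
  · have := congrFun h i
    simp only [Pi.zero_apply, sub_eq_zero, Nat.cast_inj] at this
    exact Fin.ext this
  · have := (x i).isLt
    have := (y i).isLt
    rw [abs_le]
    constructor <;> dsimp only <;> omega
  · simpa only [Int.cast_sub, Int.cast_natCast, ← Pi.sub_def, sub_dotProduct, sub_eq_zero]
      using hfxy

theorem intCast_ne_zero_of_abs_lt {ι : Type*} {n : ℕ} {w : ι → ℤ} (hw : w ≠ 0)
    (hwn : ∀ i, |w i| < n) : (fun i => (w i : ZMod n)) ≠ 0 := by
  contrapose! hw
  funext i
  exact Int.eq_zero_of_abs_lt_dvd ((ZMod.intCast_zmod_eq_zero_iff_dvd _ _).mp (congrFun hw i))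
    (hwn i)

theorem exists_intCast_ne_zero_dotProduct_eq_zero_sum_sq_le {p : ℕ} (hp : 1 < p)
    (g : Fin 2 → ZMod p) :
    ∃ w : Fin 2 → ℤ, (fun i => (w i : ZMod p)) ≠ 0 ∧ (fun i => (w i : ZMod p)) ⬝ᵥ g = 0 ∧
      ∑ i, (w i : ℝ) ^ 2 ≤ 2 * p := by
  have : NeZero p := ⟨by omega⟩
  obtain ⟨w, hw, hwk, hwg⟩ := exists_ne_zero_abs_le_dotProduct_eq_zero g (k := p.sqrt)
    (by simpa [sq] using p.lt_succ_sqrt)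
  have hsq : ∀ i, (w i : ℝ) ^ 2 ≤ p := fun i => by
    have : (w i) ^ 2 ≤ (p.sqrt : ℤ) ^ 2 := sq_le_sq' (abs_le.mp (hwk i)).1 (abs_le.mp (hwk i)).2
    exact_mod_cast this.trans (by exact_mod_cast p.sqrt_le')
  refine ⟨w, intCast_ne_zero_of_abs_lt hw fun i => (hwk i).trans_lt ?_, hwg, ?_⟩
  · exact_mod_cast p.sqrt_lt_self hp
  · simp only [Fin.sum_univ_two]
    linarith [hsq 0, hsq 1]

theorem Module.Dual.ker_eq_span_singleton {K V : Type*} [Field K] [AddCommGroup V] [Module K V]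
    [FiniteDimensional K V] (hV : finrank K V = 2) {f : Dual K V} (hf : f ≠ 0) {g : V}
    (hg : g ≠ 0) (hfg : f g = 0) : LinearMap.ker f = K ∙ g := by
  refine (Submodule.eq_of_le_of_finrank_eq
    ((Submodule.span_singleton_le_iff_mem _ _).mpr hfg) ?_).symm
  have := finrank_ker_add_one_of_ne_zero hf
  rw [finrank_span_singleton hg]
  omega

theorem ZMod.span_singleton_toAddSubgroup_eq_zmultiples {n : ℕ} {M : Type*} [AddCommGroup M]
    [Module (ZMod n) M] (g : M) :
    (ZMod n ∙ g).toAddSubgroup = AddSubgroup.zmultiples g := by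
  ext x
  simp only [Submodule.mem_toAddSubgroup, Submodule.mem_span_singleton,
    AddSubgroup.mem_zmultiples_iff]
  constructor
  · rintro ⟨a, rfl⟩
    obtain ⟨k, rfl⟩ := ZMod.intCast_surjective a
    exact ⟨k, (Int.cast_smul_eq_zsmul _ _ _).symm⟩
  · rintro ⟨k, rfl⟩
    exact ⟨k, Int.cast_smul_eq_zsmul _ _ _⟩

/-- Let `p` be a prime and let `C` be a nontrivial cyclic subgroup of
`(ℤ/p)²`.  Then there exists a group homomorphism `r : ℤ² → ℤ` such that the kernel of the
induced homomorphism `(ℤ/p)² → ℤ/p` (obtained from `r` by reduction modulo `p`) is exactly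
`C`, and such that the unique `ℝ`-linear extension `r_ℝ : ℝ² → ℝ` of `r` satisfies
`|r_ℝ(x₁) − r_ℝ(x₂)| ≤ √(2p) · ‖x₁ − x₂‖` for all `x₁, x₂ ∈ ℝ²` (Euclidean norm). -/
theorem exists_hom_ker_eq_cyclic_subgroup_and_lipschitz
    (p : ℕ) (hp : p.Prime) (C : AddSubgroup (Fin 2 → ZMod p))
    (hC : IsAddCyclic C) (hCne : C ≠ ⊥) :
    ∃ r : (Fin 2 → ℤ) →+ ℤ,
      (∃ rbar : (Fin 2 → ZMod p) →+ ZMod p,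
        (∀ x : Fin 2 → ℤ, rbar (fun i => (x i : ZMod p)) = ((r x : ℤ) : ZMod p)) ∧
        rbar.ker = C) ∧
      (∃ rR : EuclideanSpace ℝ (Fin 2) →ₗ[ℝ] ℝ,
        (∀ x : Fin 2 → ℤ, rR (WithLp.toLp 2 (fun i => (x i : ℝ))) = (r x : ℝ)) ∧
        ∀ x₁ x₂ : EuclideanSpace ℝ (Fin 2),
          |rR x₁ - rR x₂| ≤ Real.sqrt (2 * p) * ‖x₁ - x₂‖) := by
  have : Fact p.Prime := ⟨hp⟩
  obtain ⟨g, rfl⟩ := (AddSubgroup.isAddCyclic_iff_exists_zmultiples_eq_top C).mp hC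
  have hg : g ≠ 0 := by rintro rfl; simp at hCne
  obtain ⟨w, hw, hwg, hwp⟩ := exists_intCast_ne_zero_dotProduct_eq_zero_sum_sq_le hp.one_lt g
  set f := dotProductEquiv (ZMod p) (Fin 2) (fun i => (w i : ZMod p))
  set v : EuclideanSpace ℝ (Fin 2) := WithLp.toLp 2 (fun i => (w i : ℝ))
  refine ⟨(dotProductEquiv ℤ (Fin 2) w).toAddMonoidHom, ⟨f.toAddMonoidHom, fun x => ?_, ?_⟩,
    innerₛₗ ℝ v, fun x => ?_, fun x₁ x₂ => ?_⟩
  · simp [f, dotProduct]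
  · have hf : f ≠ 0 := (dotProductEquiv (ZMod p) (Fin 2)).map_ne_zero_iff.mpr hw
    rw [← ZMod.span_singleton_toAddSubgroup_eq_zmultiples (n := p),
      ← Dual.ker_eq_span_singleton (by simp) hf hg hwg]
    rfl
  · simp [v, dotProduct, PiLp.inner_apply, mul_comm]
  · have hv : ‖v‖ ≤ Real.sqrt (2 * p) := by
      rw [EuclideanSpace.norm_eq]
      exact Real.sqrt_le_sqrt (by simpa [v] using hwp)
    calc |innerₛₗ ℝ v x₁ - innerₛₗ ℝ v x₂| = |inner ℝ v (x₁ - x₂)| := by simp [inner_sub_right]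
      _ ≤ ‖v‖ * ‖x₁ - x₂‖ := abs_real_inner_le_norm v _
      _ ≤ Real.sqrt (2 * p) * ‖x₁ - x₂‖ := by gcongr
end

section
/- Let G be a group containing a normal subgroup A which is isomorphic to ℤⁿ, has finite index in G, and is equal to its own centralizer in G (i.e., G is an abstract crystallographic group with translation subgroup A). Let s be an integer with s ≡ 1 mod [G : A]. Then there exists a group homomorphism φ : G → G such that φ(a) = aˢ for all a ∈ A and g⁻¹φ(g) ∈ A for all g ∈ G (that is, φ restricts to multiplication by s on A and induces the identity on G/A). -/
/-!
Fix a left transversal `T` of `A`. The difference `δ g := diff T (T g) ∈ A` is a crossed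
homomorphism for the conjugation action, `δ (g h) = h⁻¹ δ(g) h · δ(h)`, and on `A` it is
`a ↦ a ^ [G : A]` (the computation behind the transfer). Writing `s = 1 + [G : A] m`, the twist
`g ↦ g · δ(g) ^ m` is then a homomorphism which is `a ↦ a ^ s` on `A`.
-/

namespace Subgroup

open MulOpposite leftTransversals
open scoped IsMulCommutative

variable {G : Type*} [Group G] {H : Subgroup G} [H.Normal] [IsMulCommutative H] [H.FiniteIndex]

noncomputable def transversalDiff (T : H.LeftTransversal) (g : G) : H :=
  diff (MonoidHom.id H) T (op g • T)

theorem transversalDiff_mul (T : H.LeftTransversal) (g h : G) :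
    transversalDiff T (g * h) =
      MulAut.conjNormal h⁻¹ (transversalDiff T g) * transversalDiff T h := by
  rw [transversalDiff, op_mul, mul_smul, ← diff_mul_diff _ T (op h • T), smul_diff_smul',
    mul_comm']
  ext
  simp [transversalDiff]

theorem transversalDiff_of_mem (T : H.LeftTransversal) {a : G} (ha : a ∈ H) :
    (transversalDiff T a : G) = a ^ H.index := by
  rw [transversalDiff, show a = ((⟨a, ha⟩ : H) : G) from rfl, smul_diff', diff_self, one_mul]
  rfl

variable (H) in
theorem exists_monoidHom_eq_zpow_of_modEq_one (s : ℤ) (hs : s ≡ 1 [ZMOD H.index]) :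
    ∃ φ : G →* G, (∀ a ∈ H, φ a = a ^ s) ∧ ∀ g : G, g⁻¹ * φ g ∈ H := by
  obtain ⟨m, hm⟩ := hs.symm.dvd
  let T : H.LeftTransversal := default
  let δ : G → G := fun g ↦ (transversalDiff T g ^ m : H)
  have hδ_mul (g h : G) : δ (g * h) = h⁻¹ * δ g * h * δ h := by
    simp only [δ, transversalDiff_mul, mul_zpow, ← map_zpow, coe_mul, MulAut.conjNormal_apply,
      inv_inv]
  refine ⟨{ toFun := fun g ↦ g * δ g, map_one' := ?_, map_mul' := ?_ }, fun a ha ↦ ?_, fun g ↦ ?_⟩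
  · simp [δ, transversalDiff, diff_self]
  · intro g h
    simp only [hδ_mul]
    group
  · simp [δ, transversalDiff_of_mem T ha, ← zpow_natCast, ← zpow_mul, ← zpow_one_add, ← hm]
  · simpa only [MonoidHom.coe_mk, OneHom.coe_mk, inv_mul_cancel_left]
      using (transversalDiff T g ^ m).2

end Subgroup

theorem exists_expansive_endomorphism_general
    (n : ℕ) (G : Type*) [Group G] (A : Subgroup G) [A.Normal]
    (hfree : Nonempty (A ≃* Multiplicative (Fin n → ℤ)))
    (hfin : A.FiniteIndex)
    (s : ℤ) (hs : s ≡ 1 [ZMOD (A.index : ℤ)]) :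
    ∃ φ : G →* G, (∀ a ∈ A, φ a = a ^ s) ∧ ∀ g : G, g⁻¹ * φ g ∈ A := by
  obtain ⟨e⟩ := hfree
  have : IsMulCommutative A := ⟨⟨fun x y ↦ e.injective (by rw [map_mul, map_mul, mul_comm])⟩⟩
  exact A.exists_monoidHom_eq_zpow_of_modEq_one s hs

/-- Let `G` be a group containing a normal subgroup `A` which is isomorphic
to `ℤⁿ`, has finite index in `G`, and is equal to its own centralizer in `G` (i.e. `G` is an
abstract crystallographic group with translation subgroup `A`).  Let `s` be an integer with
`s ≡ 1 mod [G : A]`.  Then there exists a group homomorphism `φ : G → G` such that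
`φ(a) = aˢ` for all `a ∈ A` and `g⁻¹ φ(g) ∈ A` for all `g ∈ G`. -/
theorem exists_expansive_endomorphism
    (n : ℕ) (G : Type*) [Group G] (A : Subgroup G) [A.Normal]
    (hfree : Nonempty (A ≃* Multiplicative (Fin n → ℤ)))
    (hfin : A.FiniteIndex)
    (hcent : Subgroup.centralizer (A : Set G) = A)
    (s : ℤ) (hs : s ≡ 1 [ZMOD (A.index : ℤ)]) :
    ∃ φ : G →* G, (∀ a ∈ A, φ a = a ^ s) ∧ ∀ g : G, g⁻¹ * φ g ∈ A :=
  exists_expansive_endomorphism_general n G A hfree hfin s hs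
end

section
/- Let Δ = ℤⁿ ⋊_{−id} ℤ/2 and let s be a nonzero integer. Let H̄ ⊆ Δ be a subgroup with H̄ ∩ ℤⁿ ⊆ s·ℤⁿ. Then there exist a group homomorphism φ : Δ → Δ and a vector v ∈ ℝⁿ such that: (1) φ(x) = s·x for all x ∈ ℤⁿ and pr ∘ φ = pr, where pr : Δ → ℤ/2 is the canonical projection; (2) H̄ ⊆ im(φ); and (3) the affine map a : ℝⁿ → ℝⁿ, a(x) = s·x + v, is φ-equivariant, i.e., a(g · x) = φ(g) · a(x) for all g ∈ Δ and x ∈ ℝⁿ. -/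
/-! A homomorphism `φ : Δ → Δ` which is multiplication by `s` on `ℤⁿ` and preserves the `ℤ/2`-part
is fixed by the translation part `u` of the image of the reflection `x ↦ -x`; conjugating that
reflection by `a(x) = s x + u / 2` gives `y ↦ -y + u`, so `a` is `φ`-equivariant. The product of two
odd elements of `H̄` lies in `H̄ ∩ ℤⁿ ⊆ s ℤⁿ`, so the translation parts of the odd elements of `H̄`
all lie in one coset `u + s ℤⁿ`; for this `u`, every element of `H̄` is in the image of `φ`. -/

open Multiplicative

/-- The homomorphism `ℤ/r → G` sending the generator `1` of `ℤ/r` to a given element `g`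
satisfying `g ^ r = 1` (and the trivial homomorphism if `g ^ r ≠ 1`). -/
noncomputable def zmodPowHom {G : Type*} [Group G] (r : ℕ) (g : G) :
    Multiplicative (ZMod r) →* G := by
  classical
  exact if h : g ^ (r : ℕ) = 1 then
    AddMonoidHom.toMultiplicativeLeft
      (ZMod.lift r ⟨(zmultiplesHom (Additive G)) (Additive.ofMul g), by
        show ((r : ℕ) : ℤ) • Additive.ofMul g = 0
        rw [← ofMul_zpow, zpow_natCast, h]; rfl⟩)
  else 1

/-- The action of `ℤ/2` on `ℤⁿ` in which the nontrivial element acts by `-id`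
(written multiplicatively: the nontrivial element acts by inversion). -/
noncomputable def negIdTwist (n : ℕ) :
    Multiplicative (ZMod 2) →* MulAut (Multiplicative (Fin n → ℤ)) :=
  zmodPowHom 2 (MulEquiv.inv (Multiplicative (Fin n → ℤ)))

/-- The group `Δ = ℤⁿ ⋊_{-id} ℤ/2`, with element `(w, ε)`, acts on `ℝⁿ` by affine motions:
`x ↦ ε(x) + w` where `ε ∈ ℤ/2` acts by `±id`. -/
noncomputable def negIdAffineAction (n : ℕ)
    (g : Multiplicative (Fin n → ℤ) ⋊[negIdTwist n] Multiplicative (ZMod 2))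
    (x : Fin n → ℝ) : Fin n → ℝ :=
  (if toAdd g.right = 0 then x else -x) + fun i => ((toAdd g.left) i : ℝ)

open SemidirectProduct

local notation "Δ[" n "]" => Multiplicative (Fin n → ℤ) ⋊[negIdTwist n] Multiplicative (ZMod 2)

lemma eq_one_or_eq_ofAdd_one (ε : Multiplicative (ZMod 2)) : ε = 1 ∨ ε = ofAdd 1 := by
  revert ε; decide

@[simp]
lemma negIdTwist_ofAdd_one (n : ℕ) (a : Multiplicative (Fin n → ℤ)) :
    negIdTwist n (ofAdd 1) a = a⁻¹ := by
  have h : MulEquiv.inv (Multiplicative (Fin n → ℤ)) ^ 2 = 1 := by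
    ext; simp [pow_two]
  simp only [negIdTwist, zmodPowHom, dif_pos h]
  rfl

noncomputable def scaleTranslateHom (n : ℕ) (s : ℤ) (u : Fin n → ℤ) : Δ[n] →* Δ[n] where
  toFun g := ⟨ofAdd ((if toAdd g.right = 0 then 0 else u) + s • toAdd g.left), g.right⟩
  map_one' := by ext <;> simp
  map_mul' := by
    rintro ⟨a, ε⟩ ⟨b, δ⟩
    rcases eq_one_or_eq_ofAdd_one ε with rfl | rfl <;>
      rcases eq_one_or_eq_ofAdd_one δ with rfl | rfl <;>
      ext : 1 <;> simp +decide [mul_left, mul_right] <;> apply toAdd.injective <;> simp <;> abel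

section

variable (n : ℕ) (s : ℤ) (u : Fin n → ℤ)

lemma scaleTranslateHom_inl (w : Fin n → ℤ) :
    scaleTranslateHom n s u (inl (ofAdd w)) = inl (ofAdd (s • w)) := by
  ext : 1 <;> simp [scaleTranslateHom]

lemma rightHom_scaleTranslateHom (g : Δ[n]) :
    rightHom (scaleTranslateHom n s u g) = rightHom g :=
  rfl

lemma negIdAffineAction_scaleTranslateHom (g : Δ[n]) (x : Fin n → ℝ) :
    (s : ℝ) • negIdAffineAction n g x + (fun i => (u i : ℝ) / 2)
      = negIdAffineAction n (scaleTranslateHom n s u g) ((s : ℝ) • x + fun i => (u i : ℝ) / 2) := by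
  obtain ⟨a, ε⟩ := g
  funext i
  rcases eq_one_or_eq_ofAdd_one ε with rfl | rfl <;>
    simp [negIdAffineAction, scaleTranslateHom] <;> ring

end

section

variable {n : ℕ} {s : ℤ} {H : Subgroup Δ[n]}

lemma exists_left_eq_smul_of_mem (hH : ∀ w : Fin n → ℤ, inl (ofAdd w) ∈ H → ∃ y, w = s • y)
    {g : Δ[n]} (hg : g ∈ H) (hright : g.right = 1) : ∃ y, toAdd g.left = s • y :=
  hH _ (by rwa [← inl_left_mul_inr_right g, hright, map_one, mul_one] at hg)

lemma exists_left_mem_coset (hH : ∀ w : Fin n → ℤ, inl (ofAdd w) ∈ H → ∃ y, w = s • y) :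
    ∃ u : Fin n → ℤ, ∀ g ∈ H, g.right = ofAdd 1 → ∃ y, toAdd g.left = u + s • y := by
  by_cases hodd : ∃ g₀ ∈ H, g₀.right = ofAdd 1
  · obtain ⟨g₀, hg₀, hright₀⟩ := hodd
    refine ⟨toAdd g₀.left, fun g hg hright => ?_⟩
    obtain ⟨y, hy⟩ := exists_left_eq_smul_of_mem hH (mul_mem hg hg₀)
      (by rw [mul_right, hright, hright₀]; decide)
    refine ⟨y, ?_⟩
    rw [← hy, mul_left, hright]
    simp
  · push Not at hodd
    exact ⟨0, fun g hg hright => absurd hright (hodd g hg)⟩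

lemma le_range_scaleTranslateHom {u : Fin n → ℤ}
    (hH : ∀ w : Fin n → ℤ, inl (ofAdd w) ∈ H → ∃ y, w = s • y)
    (hu : ∀ g ∈ H, g.right = ofAdd 1 → ∃ y, toAdd g.left = u + s • y) :
    H ≤ (scaleTranslateHom n s u).range := by
  rintro ⟨a, ε⟩ hg
  obtain ⟨w, rfl⟩ := ofAdd.surjective a
  rcases eq_one_or_eq_ofAdd_one ε with rfl | rfl
  · obtain ⟨y, rfl : w = s • y⟩ := exists_left_eq_smul_of_mem hH hg rfl
    exact ⟨⟨ofAdd y, 1⟩, by ext : 1 <;> simp [scaleTranslateHom]⟩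
  · obtain ⟨y, rfl : w = u + s • y⟩ := hu _ hg rfl
    exact ⟨⟨ofAdd y, ofAdd 1⟩, by ext : 1 <;> simp [scaleTranslateHom]⟩

end

theorem exists_expansive_endo_of_semidirect_negId_general
    (n : ℕ) (s : ℤ)
    (Hbar : Subgroup (Multiplicative (Fin n → ℤ) ⋊[negIdTwist n] Multiplicative (ZMod 2)))
    (hHbar : ∀ w : Fin n → ℤ, SemidirectProduct.inl (ofAdd w) ∈ Hbar →
      ∃ y : Fin n → ℤ, w = s • y) :
    ∃ (φ : (Multiplicative (Fin n → ℤ) ⋊[negIdTwist n] Multiplicative (ZMod 2)) →*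
          (Multiplicative (Fin n → ℤ) ⋊[negIdTwist n] Multiplicative (ZMod 2)))
      (v : Fin n → ℝ),
      (∀ w : Fin n → ℤ,
        φ (SemidirectProduct.inl (ofAdd w)) = SemidirectProduct.inl (ofAdd (s • w))) ∧
      (∀ g, SemidirectProduct.rightHom (φ g) = SemidirectProduct.rightHom g) ∧
      Hbar ≤ φ.range ∧
      (∀ g x, (s : ℝ) • negIdAffineAction n g x + v
          = negIdAffineAction n (φ g) ((s : ℝ) • x + v)) := by
  obtain ⟨u, hu⟩ := exists_left_mem_coset hHbar
  exact ⟨scaleTranslateHom n s u, fun i => (u i : ℝ) / 2, scaleTranslateHom_inl n s u,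
    rightHom_scaleTranslateHom n s u, le_range_scaleTranslateHom hHbar hu,
    negIdAffineAction_scaleTranslateHom n s u⟩

/-- Let `Δ = ℤⁿ ⋊_{-id} ℤ/2` and let `s` be a nonzero integer.  Let
`H̄ ⊆ Δ` be a subgroup with `H̄ ∩ ℤⁿ ⊆ s·ℤⁿ`.  Then there exist a group homomorphism
`φ : Δ → Δ` and a vector `v ∈ ℝⁿ` such that:  (1) `φ(x) = s·x` for all `x ∈ ℤⁿ` and
`pr ∘ φ = pr` for the canonical projection `pr : Δ → ℤ/2`;  (2) `H̄ ⊆ im(φ)`; and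
(3) the affine map `a(x) = s·x + v` is `φ`-equivariant, i.e. `a(g·x) = φ(g)·a(x)` for
all `g ∈ Δ` and `x ∈ ℝⁿ`. -/
theorem exists_expansive_endo_of_semidirect_negId
    (n : ℕ) (s : ℤ) (hs : s ≠ 0)
    (Hbar : Subgroup (Multiplicative (Fin n → ℤ) ⋊[negIdTwist n] Multiplicative (ZMod 2)))
    (hHbar : ∀ w : Fin n → ℤ, SemidirectProduct.inl (ofAdd w) ∈ Hbar →
      ∃ y : Fin n → ℤ, w = s • y) :
    ∃ (φ : (Multiplicative (Fin n → ℤ) ⋊[negIdTwist n] Multiplicative (ZMod 2)) →*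
          (Multiplicative (Fin n → ℤ) ⋊[negIdTwist n] Multiplicative (ZMod 2)))
      (v : Fin n → ℝ),
      (∀ w : Fin n → ℤ,
        φ (SemidirectProduct.inl (ofAdd w)) = SemidirectProduct.inl (ofAdd (s • w))) ∧
      (∀ g, SemidirectProduct.rightHom (φ g) = SemidirectProduct.rightHom g) ∧
      Hbar ≤ φ.range ∧
      (∀ g x, (s : ℝ) • negIdAffineAction n g x + v
          = negIdAffineAction n (φ g) ((s : ℝ) • x + v)) :=
  exists_expansive_endo_of_semidirect_negId_general n s Hbar hHbar
end

section
/- Let Γ be a finitely generated group. Then the following two statements are equivalent: (i) for every normal subgroup N of Γ such that the quotient Γ/N contains a finitely generated abelian subgroup of finite index, the quotient Γ/N is virtually cyclic (i.e., Γ/N contains a cyclic subgroup of finite index); (ii) for every subgroup Γ₀ ⊆ Γ of finite index, the torsion-free rank of the abelianization Γ₀/[Γ₀, Γ₀] is at most 1. -/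
/-!
Work with ranks over `ℤ`: `dim_ℚ (ℚ ⊗ A) = rank_ℤ A`, and a finite-index subgroup of an abelian
group has the same rank as the group. Hence a finitely generated abelian group has rank at most
one exactly when it is virtually cyclic.

(ii) ⇒ (i): if `B ≤ Γ/N` is abelian, finitely generated and of finite index, its preimage `Γ₀`
has finite index and `Γ₀^{ab}` maps onto `B`, so `B` has rank at most one and is virtually cyclic.

(i) ⇒ (ii): let `Γ₁` be the normal core of `Γ₀` and `N = [Γ₁, Γ₁]`. Then `Γ₁/N` is a finitely
generated abelian subgroup of finite index in `Γ/N`, so `Γ/N` is virtually cyclic, and so is its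
subgroup `Γ₁^{ab} = Γ₁/N`. The image of `Γ₁^{ab}` in `Γ₀^{ab}` has finite index, so
`rank Γ₀^{ab} ≤ rank Γ₁^{ab} ≤ 1`.
-/

open scoped TensorProduct

universe u

theorem rank_rat_tensorProduct (M : Type*) [AddCommGroup M] :
    Module.rank ℚ (ℚ ⊗[ℤ] M) = Module.rank ℤ M :=
  (IsFractionRing.rank_right_eq ℤ ℚ _).trans <|
    @IsLocalizedModule.rank_eq _ _ _ _ _ _ le_rfl _ _ _ _
      (IsLocalization.tensorProduct_isLocalizedModule (nonZeroDivisors ℤ) ℚ)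

namespace AddSubgroup

variable {M : Type u} [AddCommGroup M]

theorem rank_eq_of_finiteIndex (A : AddSubgroup M) [A.FiniteIndex] :
    Module.rank ℤ A = Module.rank ℤ M := by
  have hquot : Module.rank ℤ (M ⧸ A.toIntSubmodule) = 0 := by
    refine rank_eq_zero_iff.mpr fun q => ?_
    obtain ⟨x, rfl⟩ := Submodule.Quotient.mk_surjective _ q
    refine ⟨A.index, by exact_mod_cast FiniteIndex.index_ne_zero, ?_⟩
    rw [← Submodule.Quotient.mk_smul, Submodule.Quotient.mk_eq_zero]
    exact_mod_cast A.nsmul_index_mem x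
  rw [← rank_quotient_add_rank_of_isDomain A.toIntSubmodule, hquot, zero_add]
  rfl

theorem rank_le_one_of_zmultiples_finiteIndex (x : M) [(zmultiples x).FiniteIndex] :
    Module.rank ℤ M ≤ 1 := by
  rw [← (zmultiples x).rank_eq_of_finiteIndex]
  have hsurj : Function.Surjective
      (LinearMap.toSpanSingleton ℤ (zmultiples x) ⟨x, mem_zmultiples x⟩) := by
    rintro ⟨_, k, rfl⟩
    exact ⟨k, rfl⟩
  simpa using LinearMap.lift_rank_le_of_surjective _ hsurj

theorem exists_zsmul_mem_zmultiples_of_rank_le_one (hrank : Module.rank ℤ M ≤ 1) {x : M}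
    (hx : ¬IsOfFinAddOrder x) (y : M) : ∃ n : ℤ, n ≠ 0 ∧ n • y ∈ zmultiples x := by
  have hdep : ¬LinearIndependent ℤ ![x, y] := fun hli => by
    have h2 : 2 ≤ Module.rank ℤ M := by simpa using hli.cardinal_lift_le_rank
    exact (h2.trans hrank).not_gt Cardinal.one_lt_two
  obtain ⟨s, t, hst, hne⟩ : ∃ s t : ℤ, s • x + t • y = 0 ∧ ¬(s = 0 ∧ t = 0) := by
    simpa [LinearIndependent.pair_iff] using hdep
  have ht : t ≠ 0 := by
    rintro rfl
    exact hx (isOfFinAddOrder_iff_zsmul_eq_zero.mpr ⟨s, by simpa using hne, by simpa using hst⟩)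
  exact ⟨t, ht, ⟨-s, show (-s) • x = t • y by rw [neg_zsmul, neg_eq_of_add_eq_zero_right hst]⟩⟩

theorem exists_zmultiples_finiteIndex_of_rank_le_one [AddGroup.FG M]
    (hrank : Module.rank ℤ M ≤ 1) : ∃ x : M, (zmultiples x).FiniteIndex := by
  by_cases htors : IsAddTorsion M
  · have := AddCommGroup.finite_of_fg_isAddTorsion M htors
    exact ⟨0, inferInstance⟩
  obtain ⟨x, hx⟩ : ∃ x : M, ¬IsOfFinAddOrder x := by simpa [IsAddTorsion] using htors
  have hquot : IsAddTorsion (M ⧸ zmultiples x) := by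
    rintro ⟨y⟩
    obtain ⟨n, hn, hny⟩ := exists_zsmul_mem_zmultiples_of_rank_le_one hrank hx y
    exact isOfFinAddOrder_iff_zsmul_eq_zero.mpr
      ⟨n, hn, (QuotientAddGroup.eq_zero_iff _).mpr hny⟩
  have := AddCommGroup.finite_of_fg_isAddTorsion _ hquot
  exact ⟨x, finiteIndex_of_finite_quotient⟩

end AddSubgroup

theorem AddMonoidHom.rank_le_of_finiteIndex_range {M N : Type u} [AddCommGroup M]
    [AddCommGroup N] (f : M →+ N) [f.range.FiniteIndex] :
    Module.rank ℤ N ≤ Module.rank ℤ M :=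
  f.range.rank_eq_of_finiteIndex ▸
    LinearMap.rank_le_of_surjective f.rangeRestrict.toIntLinearMap f.rangeRestrict_surjective

def IsVirtuallyCyclic (G : Type*) [Group G] : Prop :=
  ∃ C : Subgroup G, IsCyclic C ∧ C.FiniteIndex

namespace IsVirtuallyCyclic

open Subgroup

variable {G H : Type*} [Group G] [Group H]

theorem iff_exists_zpowers_finiteIndex :
    IsVirtuallyCyclic G ↔ ∃ g : G, (zpowers g).FiniteIndex := by
  constructor
  · rintro ⟨C, hC, hCi⟩
    obtain ⟨g, rfl⟩ := C.isCyclic_iff_exists_zpowers_eq_top.mp hC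
    exact ⟨g, hCi⟩
  · rintro ⟨g, hg⟩
    exact ⟨zpowers g, inferInstance, hg⟩

theorem of_injective (f : H →* G) (hf : Function.Injective f) (h : IsVirtuallyCyclic G) :
    IsVirtuallyCyclic H := by
  obtain ⟨C, hC, hCi⟩ := h
  refine ⟨C.comap f, isCyclic_of_injective (f.subgroupComap C) fun x y hxy => ?_, ⟨?_⟩⟩
  · exact Subtype.ext (hf (congrArg Subtype.val hxy))
  · rw [index_comap]
    exact FiniteIndex.index_ne_zero

theorem of_finiteIndex {K : Subgroup G} [K.FiniteIndex] (h : IsVirtuallyCyclic K) :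
    IsVirtuallyCyclic G := by
  obtain ⟨D, hD, hDi⟩ := h
  refine ⟨D.map K.subtype, ?_, ⟨?_⟩⟩
  · exact isCyclic_of_surjective _ (D.equivMapOfInjective _ K.subtype_injective).surjective
  · rw [index_map_subtype]
    exact mul_ne_zero hDi.index_ne_zero FiniteIndex.index_ne_zero

theorem rank_le_one {A : Type*} [CommGroup A] (h : IsVirtuallyCyclic A) :
    Module.rank ℤ (Additive A) ≤ 1 := by
  obtain ⟨a, ha⟩ := iff_exists_zpowers_finiteIndex.mp h
  have : (AddSubgroup.zmultiples (Additive.ofMul a)).FiniteIndex :=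
    finiteIndex_toAddSubgroup_iff.mpr ha
  exact AddSubgroup.rank_le_one_of_zmultiples_finiteIndex (Additive.ofMul a)

theorem of_rank_le_one {A : Type*} [CommGroup A] [Group.FG A]
    (h : Module.rank ℤ (Additive A) ≤ 1) : IsVirtuallyCyclic A := by
  have := GroupFG.iff_add_fg.mp ‹Group.FG A›
  obtain ⟨x, hx⟩ := AddSubgroup.exists_zmultiples_finiteIndex_of_rank_le_one h
  exact iff_exists_zpowers_finiteIndex.mpr
    ⟨x.toMul, finiteIndex_toAddSubgroup_iff.mp hx⟩

end IsVirtuallyCyclic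

theorem Subgroup.finiteIndex_map_of_surjective {G H : Type*} [Group G] [Group H] (K : Subgroup G)
    [K.FiniteIndex] {f : G →* H} (hf : Function.Surjective f) : (K.map f).FiniteIndex :=
  ⟨fun h => FiniteIndex.index_ne_zero (Nat.eq_zero_of_zero_dvd (h ▸ K.index_map_dvd hf))⟩

namespace Abelianization

variable {G H : Type u} [Group G] [Group H]

theorem rank_le_of_finiteIndex_range (f : H →* G) [f.range.FiniteIndex] :
    Module.rank ℤ (Additive (Abelianization G)) ≤ Module.rank ℤ (Additive (Abelianization H)) := by
  have := f.range.finiteIndex_map_of_surjective (f := of) QuotientGroup.mk_surjective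
  have : (map f).range.FiniteIndex := by
    refine Subgroup.finiteIndex_of_le (H := f.range.map of) ?_
    rintro _ ⟨_, ⟨x, rfl⟩, rfl⟩
    exact ⟨of x, map_of f x⟩
  have : (MonoidHom.toAdditive (map f)).range.FiniteIndex :=
    Subgroup.finiteIndex_toAddSubgroup_iff.mpr this
  exact (MonoidHom.toAdditive (map f)).rank_le_of_finiteIndex_range

theorem rank_le_of_surjective {A : Type u} [CommGroup A] (f : G →* A)
    (hf : Function.Surjective f) :
    Module.rank ℤ (Additive A) ≤ Module.rank ℤ (Additive (Abelianization G)) :=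
  LinearMap.rank_le_of_surjective (MonoidHom.toAdditive (lift f)).toIntLinearMap
    fun a =>
      let ⟨x, hx⟩ := hf a.toMul
      ⟨Additive.ofMul (of x), (lift_apply_of f x).trans hx⟩

end Abelianization

theorem Subgroup.exists_injective_abelianization_to_quotient_commutator {G : Type*} [Group G]
    (H : Subgroup G) [⁅H, H⁆.Normal] :
    ∃ j : Abelianization H →* G ⧸ ⁅H, H⁆, Function.Injective j := by
  let ψ := (QuotientGroup.mk' ⁅H, H⁆).comp H.subtype
  have hker : _root_.commutator H = ψ.ker := by
    rw [← MonoidHom.comap_ker, QuotientGroup.ker_mk', ← H.map_subtype_commutator,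
      comap_map_eq_self_of_injective H.subtype_injective]
  exact ⟨(QuotientGroup.kerLift ψ).comp (QuotientGroup.quotientMulEquivOfEq hker).toMonoidHom,
    (QuotientGroup.kerLift_injective ψ).comp (QuotientGroup.quotientMulEquivOfEq hker).injective⟩

/-- Let `Γ` be a finitely generated group.  Then the following are
equivalent:
(i) for every normal subgroup `N` of `Γ` such that `Γ/N` contains a finitely generated
abelian subgroup of finite index, the quotient `Γ/N` is virtually cyclic;
(ii) for every subgroup `Γ₀ ⊆ Γ` of finite index, the torsion-free rank of the
abelianization of `Γ₀` (i.e. `dim_ℚ (Γ₀^{ab} ⊗_ℤ ℚ)`) is at most `1`. -/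
theorem irreducible_iff_rank_le_one
    (Γ : Type) [Group Γ] (hΓ : Group.FG Γ) :
    (∀ (N : Subgroup Γ) [N.Normal],
        (∃ B : Subgroup (Γ ⧸ N),
            (∀ x ∈ B, ∀ y ∈ B, x * y = y * x) ∧ Group.FG B ∧ B.FiniteIndex) →
        ∃ C : Subgroup (Γ ⧸ N), IsCyclic C ∧ C.FiniteIndex)
      ↔
    (∀ Γ₀ : Subgroup Γ, Γ₀.FiniteIndex →
        Module.rank ℚ (ℚ ⊗[ℤ] Additive (Abelianization Γ₀)) ≤ 1) := by
  simp only [rank_rat_tensorProduct]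
  constructor
  · intro hvc Γ₀ _
    set Γ₁ := Γ₀.normalCore
    set π := QuotientGroup.mk' ⁅Γ₁, Γ₁⁆
    have hcomm : ∀ x ∈ Γ₁.map π, ∀ y ∈ Γ₁.map π, x * y = y * x := by
      rintro _ ⟨a, ha, rfl⟩ _ ⟨b, hb, rfl⟩
      rw [← commutatorElement_eq_one_iff_mul_comm, ← map_commutatorElement]
      exact (QuotientGroup.eq_one_iff _).mpr (Subgroup.commutator_mem_commutator ha hb)
    have : Group.FG Γ₁ := Subgroup.fg_of_index_ne_zero Γ₁
    have hfg : Group.FG (Γ₁.map π) := Group.fg_of_surjective (π.subgroupMap_surjective Γ₁)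
    have hvc₁ : IsVirtuallyCyclic (Γ ⧸ ⁅Γ₁, Γ₁⁆) :=
      hvc _ ⟨_, hcomm, hfg, Γ₁.finiteIndex_map_of_surjective (QuotientGroup.mk'_surjective _)⟩
    have : (Subgroup.inclusion Γ₀.normalCore_le).range.FiniteIndex := by
      rw [Subgroup.inclusion_range]
      infer_instance
    obtain ⟨j, hj⟩ := Γ₁.exists_injective_abelianization_to_quotient_commutator
    calc _ ≤ Module.rank ℤ (Additive (Abelianization Γ₁)) :=
          Abelianization.rank_le_of_finiteIndex_range (Subgroup.inclusion Γ₀.normalCore_le)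
      _ ≤ 1 := (hvc₁.of_injective j hj).rank_le_one
  · rintro hrank N _ ⟨B, hcomm, hfg, hBi⟩
    let _ : CommGroup B := { mul_comm := fun a b => Subtype.ext (hcomm a a.2 b b.2) }
    have hsurj := QuotientGroup.mk'_surjective N
    have hΓ₀ : (B.comap (QuotientGroup.mk' N)).FiniteIndex :=
      ⟨(Subgroup.index_comap_of_surjective B hsurj).trans_ne hBi.index_ne_zero⟩
    have hrankB := (Abelianization.rank_le_of_surjective _
      ((QuotientGroup.mk' N).subgroupComap_surjective_of_surjective B hsurj)).trans (hrank _ hΓ₀)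
    exact (IsVirtuallyCyclic.of_rank_le_one hrankB).of_finiteIndex
end

section
/- Let 1 → A → Γ → Q → 1 be a short exact sequence of groups with A abelian, and let Q act on A by conjugation in Γ. Assume that the group cohomology H²(Q; A) is finite, and let s be an integer with s ≡ 1 mod |H²(Q; A)|. Then there exists a group homomorphism φ : Γ → Γ such that φ(a) = aˢ for all a ∈ A and pr ∘ φ = pr, where pr : Γ → Q denotes the projection of the extension. -/
/-!
Pick a set-theoretic section `σ` of `pr`. Its factor set `f`, given by
`σ q * σ r = ι (f q r) * σ (q * r)`, is a 2-cocycle, and `s - 1` kills `H²(Q; A)`, so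
`f ^ (s - 1)` is the coboundary of some 1-cochain `c`. This says exactly that the section
`τ q = ι (c q) * σ q` has factor set `f ^ s`. Since `a ↦ a ^ s` commutes with the conjugation
action, `ι a * σ q ↦ ι (a ^ s) * τ q` is then multiplicative.
-/

open groupCohomology

namespace GroupExtension

variable {A Γ Q : Type*} [CommGroup A] [Group Γ] [Group Q] {S : GroupExtension A Γ Q}

theorem conjAct_inl (a : A) : S.conjAct (S.inl a) = 1 := by
  ext b
  apply S.inl_injective
  rw [inl_conjAct_comm, MulAut.one_apply, ← map_inv, ← map_mul, ← map_mul, mul_inv_cancel_comm]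

theorem conjAct_eq_of_rightHom_eq {e e' : Γ} (h : S.rightHom e = S.rightHom e') :
    S.conjAct e = S.conjAct e' := by
  obtain ⟨a, ha⟩ : e⁻¹ * e' ∈ S.inl.range := by
    rw [S.range_inl_eq_ker_rightHom, MonoidHom.mem_ker, map_mul, map_inv, h, inv_mul_cancel]
  rw [← mul_inv_cancel_left e e', ← ha, map_mul, conjAct_inl, mul_one]

namespace Section

variable (σ : S.Section)

noncomputable def factorSet (q r : Q) : A :=
  (MonoidHom.ofInjective S.inl_injective).symm
    ⟨σ q * σ r * (σ (q * r))⁻¹, σ.mul_mul_mul_inv_mem_range_inl q r⟩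

theorem inl_factorSet (q r : Q) : S.inl (σ.factorSet q r) = σ q * σ r * (σ (q * r))⁻¹ :=
  MonoidHom.apply_ofInjective_symm _ _

theorem mul_eq_inl_factorSet_mul (q r : Q) :
    σ q * σ r = S.inl (σ.factorSet q r) * σ (q * r) := by
  rw [inl_factorSet, inv_mul_cancel_right]

theorem inl_factorSet_one_one : S.inl (σ.factorSet 1 1) = σ 1 := by
  rw [inl_factorSet, mul_one, mul_inv_cancel_right]

theorem factorSet_mul_factorSet (q r t : Q) :
    σ.factorSet (q * r) t * σ.factorSet q r =
      S.conjAct (σ q) (σ.factorSet r t) * σ.factorSet q (r * t) := by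
  apply S.inl_injective
  apply mul_right_cancel (b := σ (q * r * t))
  calc S.inl (σ.factorSet (q * r) t * σ.factorSet q r) * σ (q * r * t)
      = σ q * σ r * σ t := by
        rw [mul_eq_inl_factorSet_mul σ q r, mul_assoc (S.inl _),
          mul_eq_inl_factorSet_mul σ (q * r) t, mul_comm, map_mul S.inl, mul_assoc]
    _ = S.inl (S.conjAct (σ q) (σ.factorSet r t) * σ.factorSet q (r * t)) * σ (q * r * t) := by
        rw [mul_assoc (σ q), mul_eq_inl_factorSet_mul σ r t, map_mul S.inl, inl_conjAct_comm,
          mul_assoc q r t, mul_assoc _ (S.inl (σ.factorSet q (r * t))),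
          ← mul_eq_inl_factorSet_mul σ q (r * t)]
        group

theorem mul_inv_rightHom_mem_range_inl (e : Γ) : e * (σ (S.rightHom e))⁻¹ ∈ S.inl.range := by
  rw [S.range_inl_eq_ker_rightHom, MonoidHom.mem_ker, map_mul, map_inv, rightHom_section,
    mul_inv_cancel]

noncomputable def inlPart (e : Γ) : A :=
  (MonoidHom.ofInjective S.inl_injective).symm ⟨_, σ.mul_inv_rightHom_mem_range_inl e⟩

theorem inl_inlPart (e : Γ) : S.inl (σ.inlPart e) = e * (σ (S.rightHom e))⁻¹ :=
  MonoidHom.apply_ofInjective_symm _ _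

theorem inlPart_mul (e e' : Γ) :
    σ.inlPart (e * e') = σ.inlPart e * S.conjAct (σ (S.rightHom e)) (σ.inlPart e') *
      σ.factorSet (S.rightHom e) (S.rightHom e') := by
  apply S.inl_injective
  rw [map_mul, map_mul, inl_conjAct_comm, inl_factorSet, inl_inlPart, inl_inlPart, inl_inlPart,
    map_mul]
  group

theorem inlPart_inl (a : A) : σ.inlPart (S.inl a) = a * (σ.factorSet 1 1)⁻¹ := by
  apply S.inl_injective
  rw [inl_inlPart, rightHom_inl, map_mul, map_inv, inl_factorSet_one_one]

def twist (c : Q → A) : S.Section where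
  toFun q := S.inl (c q) * σ q
  rightInverse_rightHom q := by rw [map_mul, rightHom_inl, one_mul, rightHom_section]

theorem twist_apply (c : Q → A) (q : Q) : σ.twist c q = S.inl (c q) * σ q := rfl

theorem factorSet_twist (c : Q → A) (q r : Q) :
    (σ.twist c).factorSet q r =
      c q * S.conjAct (σ q) (c r) * σ.factorSet q r * (c (q * r))⁻¹ := by
  apply S.inl_injective
  rw [inl_factorSet, twist_apply, twist_apply, twist_apply, map_mul S.inl, map_mul S.inl,
    map_mul S.inl, inl_conjAct_comm, map_inv, inl_factorSet]
  group

variable (τ : S.Section) (h : A →* A)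
  (h_conjAct : ∀ e a, h (S.conjAct e a) = S.conjAct e (h a))
  (h_factorSet : ∀ q r, h (σ.factorSet q r) = τ.factorSet q r)

noncomputable def homOfFactorSet : Γ →* Γ :=
  MonoidHom.mk' (fun e ↦ S.inl (h (σ.inlPart e)) * τ (S.rightHom e)) fun e e' ↦ by
    have hτσ : S.conjAct (σ (S.rightHom e)) = S.conjAct (τ (S.rightHom e)) :=
      conjAct_eq_of_rightHom_eq (by rw [rightHom_section, rightHom_section])
    rw [inlPart_mul, map_mul h, map_mul h, h_conjAct, h_factorSet, hτσ, map_mul S.inl,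
      map_mul S.inl, inl_conjAct_comm, inl_factorSet, map_mul S.rightHom]
    group

theorem homOfFactorSet_apply (e : Γ) :
    σ.homOfFactorSet τ h h_conjAct h_factorSet e = S.inl (h (σ.inlPart e)) * τ (S.rightHom e) :=
  rfl

theorem homOfFactorSet_inl (a : A) :
    σ.homOfFactorSet τ h h_conjAct h_factorSet (S.inl a) = S.inl (h a) := by
  rw [homOfFactorSet_apply, inlPart_inl, rightHom_inl, map_mul h, map_inv h, h_factorSet,
    map_mul S.inl, map_inv S.inl, inl_factorSet_one_one, inv_mul_cancel_right]

theorem rightHom_homOfFactorSet (e : Γ) :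
    S.rightHom (σ.homOfFactorSet τ h h_conjAct h_factorSet e) = S.rightHom e := by
  rw [homOfFactorSet_apply, map_mul, rightHom_inl, one_mul, rightHom_section]

end Section
end GroupExtension

universe u

theorem zsmul_mem_coboundaries₂_of_natCard_dvd {k G : Type u} [CommRing k] [Group G]
    {X : Rep k G} (z : cocycles₂ X) {n : ℤ} (hn : (Nat.card (H2 X) : ℤ) ∣ n) :
    ⇑(n • z) ∈ coboundaries₂ X := by
  obtain ⟨m, rfl⟩ := hn
  rw [← H2π_eq_zero_iff, map_zsmul, mul_comm, mul_smul, natCast_zsmul, card_nsmul_eq_zero',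
    zsmul_zero]

namespace GroupExtension.Section

variable {A Γ Q : Type} [CommGroup A] [Group Γ] [Group Q] {S : GroupExtension A Γ Q}
  (σ : S.Section) (ρ : Representation ℤ Q (Additive A))
  (hρ : ∀ e a, ρ (S.rightHom e) (.ofMul a) = .ofMul (S.conjAct e a))

include hρ in
theorem representation_apply_ofMul (q : Q) (a : A) :
    ρ q (.ofMul a) = .ofMul (S.conjAct (σ q) a) := by
  rw [← hρ, rightHom_section]

include hρ in
theorem ofMul_factorSet_mem_cocycles₂ :
    (fun p : Q × Q ↦ Additive.ofMul (σ.factorSet p.1 p.2)) ∈ cocycles₂ (Rep.of ρ) := by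
  refine (mem_cocycles₂_iff _).2 fun q r t ↦ ?_
  rw [Rep.of_ρ, σ.representation_apply_ofMul ρ hρ, ← ofMul_mul, ← ofMul_mul,
    factorSet_mul_factorSet]

include hρ in
theorem exists_factorSet_eq_zpow {n : ℤ}
    (hn : (Nat.card (H2 (Rep.of ρ)) : ℤ) ∣ n - 1) :
    ∃ τ : S.Section, ∀ q r, τ.factorSet q r = σ.factorSet q r ^ n := by
  obtain ⟨c, hc⟩ := zsmul_mem_coboundaries₂_of_natCard_dvd
    ⟨_, σ.ofMul_factorSet_mem_cocycles₂ ρ hρ⟩ hn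
  let c' (q : Q) : A := Additive.toMul (c q : Additive A)
  refine ⟨σ.twist c', fun q r ↦ ?_⟩
  have hqr : (ρ q (.ofMul (c' r))).toMul / c' (q * r) * c' q = σ.factorSet q r ^ (n - 1) :=
    congrArg Additive.toMul (congrFun hc (q, r))
  rw [σ.representation_apply_ofMul ρ hρ, toMul_ofMul] at hqr
  rw [factorSet_twist, ← sub_add_cancel n 1, zpow_add_one, ← hqr, div_eq_mul_inv]
  ac_rfl

end GroupExtension.Section

theorem exists_pseudo_expansive_homomorphism_general
    (A Γ Q : Type) [CommGroup A] [Group Γ] [Group Q]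
    (ι : A →* Γ) (pr : Γ →* Q)
    (hι : Function.Injective ι) (hpr : Function.Surjective pr)
    (hexact : pr.ker = ι.range)
    (ρ : Representation ℤ Q (Additive A))
    (hρ : ∀ (γ : Γ) (a : A),
      ι (Additive.toMul (ρ (pr γ) (Additive.ofMul a))) = γ * ι a * γ⁻¹)
    (s : ℤ) (hs : s ≡ 1 [ZMOD (Nat.card (groupCohomology (Rep.of ρ) 2) : ℤ)]) :
    ∃ φ : Γ →* Γ, (∀ a : A, φ (ι a) = ι (a ^ s)) ∧ ∀ g : Γ, pr (φ g) = pr g := by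
  let S : GroupExtension A Γ Q := ⟨ι, pr, hι, hexact.symm, hpr⟩
  have hρS (γ : Γ) (a : A) : ρ (S.rightHom γ) (.ofMul a) = .ofMul (S.conjAct γ a) :=
    Additive.toMul.injective <| hι <| (hρ γ a).trans S.inl_conjAct_comm.symm
  let σ := S.surjInvRightHom
  obtain ⟨τ, hτ⟩ := σ.exists_factorSet_eq_zpow ρ hρS (Int.ModEq.dvd hs.symm)
  let φ := σ.homOfFactorSet τ (zpowGroupHom s) (fun γ a ↦ (map_zpow (S.conjAct γ) a s).symm)
    fun q r ↦ (hτ q r).symm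
  exact ⟨φ, fun a ↦ σ.homOfFactorSet_inl .., fun γ ↦ σ.rightHom_homOfFactorSet ..⟩

/-- Let `1 → A → Γ → Q → 1` be a short exact sequence of groups with `A`
abelian, and let `Q` act on `A` by conjugation in `Γ` (the representation `ρ` below).
Assume that `H²(Q; A)` is finite and let `s` be an integer with `s ≡ 1 mod |H²(Q; A)|`.
Then there exists a group homomorphism `φ : Γ → Γ` (a *pseudo `s`-expansive* map) such that
`φ(a) = aˢ` for all `a ∈ A` and `pr ∘ φ = pr`. -/
theorem exists_pseudo_expansive_homomorphism
    (A Γ Q : Type) [CommGroup A] [Group Γ] [Group Q]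
    (ι : A →* Γ) (pr : Γ →* Q)
    (hι : Function.Injective ι) (hpr : Function.Surjective pr)
    (hexact : pr.ker = ι.range)
    (ρ : Representation ℤ Q (Additive A))
    (hρ : ∀ (γ : Γ) (a : A),
      ι (Additive.toMul (ρ (pr γ) (Additive.ofMul a))) = γ * ι a * γ⁻¹)
    (hfin : Finite (groupCohomology (Rep.of ρ) 2))
    (s : ℤ) (hs : s ≡ 1 [ZMOD (Nat.card (groupCohomology (Rep.of ρ) 2) : ℤ)]) :
    ∃ φ : Γ →* Γ, (∀ a : A, φ (ι a) = ι (a ^ s)) ∧ ∀ g : Γ, pr (φ g) = pr g :=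
  exists_pseudo_expansive_homomorphism_general A Γ Q ι pr hι hpr hexact ρ hρ s hs
end

section
/- Let 1 → A → Γ → Q → 1 be a short exact sequence of groups with A abelian, and let Q act on A by conjugation in Γ. Assume that the group cohomology H²(Q; A) is finite, and let s be an integer with s ≡ 1 mod |H²(Q; A)|. Let sA := {aˢ : a ∈ A}, a normal subgroup of Γ. Then the induced short exact sequence 1 → A/sA → Γ/sA → Q → 1 splits: there exists a group homomorphism σ : Q → Γ/sA whose composite with the projection Γ/sA → Q is the identity on Q. -/
/-!
Choose a set-theoretic section `τ` of `Γ → Q`; its factor set `f(g, h) = τ g τ h τ(gh)⁻¹` is a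
2-cocycle, and `n • f` is a coboundary `∂x` for `n = |H²(Q; A)|`. Writing `s = 1 + k n`, the
twisted section `q ↦ x(q)ᵏ τ q` has factor set `f + k ∂x = s • f`, whose values lie in `sA`,
so it becomes a homomorphism modulo `sA`.
-/

open groupCohomology

universe u

theorem QuotientGroup.exists_monoidHom_of_mul_mul_inv_mem {G Q : Type*} [Group G] [Group Q]
    (N : Subgroup G) [N.Normal] (t : Q → G) (ht : ∀ g h, t g * t h * (t (g * h))⁻¹ ∈ N) :
    ∃ σ : Q →* G ⧸ N, ∀ q, σ q = t q := by
  refine ⟨MonoidHom.mk' (fun q => (t q : G ⧸ N)) fun g h => ?_, fun _ => rfl⟩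
  rw [← QuotientGroup.mk_mul, eq_comm, ← mul_inv_eq_one, ← QuotientGroup.mk_inv,
    ← QuotientGroup.mk_mul, QuotientGroup.eq_one_iff]
  exact ht g h

theorem groupCohomology.natCard_H2_smul_mem_coboundaries₂ {k G : Type u} [CommRing k] [Group G]
    {M : Rep k G} {f : G × G → M} (hf : f ∈ cocycles₂ M) :
    Nat.card (H2 M) • f ∈ coboundaries₂ M := by
  refine (H2π_eq_zero_iff (Nat.card (H2 M) • ⟨f, hf⟩)).1 ?_
  rw [map_nsmul]
  exact card_nsmul_eq_zero'

section Extension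

variable {A Q : Type} {Γ : Type*} [CommGroup A] [Group Γ] [Group Q] {ι : A →* Γ} {pr : Γ →* Q}
  {ρ : Representation ℤ Q (Additive A)} {τ : Q → Γ}

theorem exists_factorSet (hexact : pr.ker = ι.range) (hτ : ∀ q, pr (τ q) = q) :
    ∃ f : Q × Q → Additive A, ∀ g h,
      ι (Additive.toMul (f (g, h))) = τ g * τ h * (τ (g * h))⁻¹ := by
  have hker (g h : Q) : τ g * τ h * (τ (g * h))⁻¹ ∈ ι.range := by
    rw [← hexact, MonoidHom.mem_ker]
    simp [hτ]
  choose f hf using hker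
  exact ⟨fun p => Additive.ofMul (f p.1 p.2), fun g h => hf g h⟩

variable
  (hρ : ∀ (γ : Γ) (a : A), ι (Additive.toMul (ρ (pr γ) (Additive.ofMul a))) = γ * ι a * γ⁻¹)
  (hτ : ∀ q, pr (τ q) = q)
include hρ hτ

theorem map_toMul_ρ_eq_conj (q : Q) (a : Additive A) :
    ι (Additive.toMul (ρ q a)) = τ q * ι (Additive.toMul a) * (τ q)⁻¹ := by
  simpa [hτ] using hρ (τ q) a.toMul

theorem factorSet_mem_cocycles₂ (hι : Function.Injective ι) {f : Q × Q → Additive A}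
    (hf : ∀ g h, ι (Additive.toMul (f (g, h))) = τ g * τ h * (τ (g * h))⁻¹) :
    f ∈ cocycles₂ (Rep.of ρ) := by
  rw [mem_cocycles₂_iff]
  intro g h j
  apply hι
  show ι (Additive.toMul (f (g * h, j)) * Additive.toMul (f (g, h))) =
    ι (Additive.toMul (ρ g (f (h, j))) * Additive.toMul (f (g, h * j)))
  rw [mul_comm, map_mul, map_mul, map_toMul_ρ_eq_conj hρ hτ, hf, hf, hf, hf, mul_assoc g h j]
  group

theorem twist_section_mul_mul_inv {f : Q × Q → Additive A}
    (hf : ∀ g h, ι (Additive.toMul (f (g, h))) = τ g * τ h * (τ (g * h))⁻¹)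
    (y : Q → Additive A) (g h : Q) :
    ι (Additive.toMul (y g)) * τ g * (ι (Additive.toMul (y h)) * τ h) *
        (ι (Additive.toMul (y (g * h))) * τ (g * h))⁻¹ =
      ι (Additive.toMul (y g + ρ g (y h) + f (g, h) - y (g * h))) := by
  simp only [toMul_sub, toMul_add, div_eq_mul_inv, map_mul, map_inv,
    map_toMul_ρ_eq_conj hρ hτ, hf]
  group

theorem exists_section_mul_mul_inv_eq_zpow (hexact : pr.ker = ι.range)
    {f : Q × Q → Additive A}
    (hf : ∀ g h, ι (Additive.toMul (f (g, h))) = τ g * τ h * (τ (g * h))⁻¹)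
    {n : ℕ} (hn : n • f ∈ coboundaries₂ (Rep.of ρ)) {s : ℤ} (hs : s ≡ 1 [ZMOD n]) :
    ∃ t : Q → Γ, (∀ q, pr (t q) = q) ∧
      ∀ g h, t g * t h * (t (g * h))⁻¹ = ι (Additive.toMul (f (g, h)) ^ s) := by
  obtain ⟨x, hx⟩ := hn
  obtain ⟨k, hk⟩ := hs.symm.dvd
  have hx' (g h : Q) : ρ g (x h) - x (g * h) + x g = n • f (g, h) := by
    simpa using congrFun hx (g, h)
  refine ⟨fun q => ι (Additive.toMul (k • x q)) * τ q, fun q => ?_, fun g h => ?_⟩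
  · have hι_mem_ker : ι (Additive.toMul (k • x q)) ∈ pr.ker := hexact ▸ ⟨_, rfl⟩
    rw [map_mul, hι_mem_ker, one_mul, hτ]
  · refine (twist_section_mul_mul_inv hρ hτ hf (fun q => k • x q) g h).trans ?_
    rw [← toMul_zsmul]
    congr 2
    calc k • x g + ρ g (k • x h) + f (g, h) - k • x (g * h)
        = k • (ρ g (x h) - x (g * h) + x g) + f (g, h) := by rw [map_zsmul]; module
      _ = s • f (g, h) := by rw [hx', eq_add_of_sub_eq' hk]; module

end Extension

theorem induced_extension_splits_general
    (A Γ Q : Type) [CommGroup A] [Group Γ] [Group Q]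
    (ι : A →* Γ) (pr : Γ →* Q)
    (hι : Function.Injective ι) (hpr : Function.Surjective pr)
    (hexact : pr.ker = ι.range)
    (ρ : Representation ℤ Q (Additive A))
    (hρ : ∀ (γ : Γ) (a : A),
      ι (Additive.toMul (ρ (pr γ) (Additive.ofMul a))) = γ * ι a * γ⁻¹)
    (s : ℤ) (hs : s ≡ 1 [ZMOD (Nat.card (groupCohomology (Rep.of ρ) 2) : ℤ)])
    [hN : ((ι.comp (zpowGroupHom s)).range).Normal] :
    ∃ σ : Q →* Γ ⧸ (ι.comp (zpowGroupHom s)).range,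
      ∀ q : Q, ∃ γ : Γ, pr γ = q ∧
        (QuotientGroup.mk γ : Γ ⧸ (ι.comp (zpowGroupHom s)).range) = σ q := by
  have hτ : ∀ q, pr (Function.surjInv hpr q) = q := Function.surjInv_eq hpr
  obtain ⟨f, hf⟩ := exists_factorSet hexact hτ
  obtain ⟨t, ht_section, ht_mul⟩ := exists_section_mul_mul_inv_eq_zpow hρ hτ hexact hf
    (natCard_H2_smul_mem_coboundaries₂ (factorSet_mem_cocycles₂ hρ hτ hι hf)) hs
  obtain ⟨σ, hσ⟩ := QuotientGroup.exists_monoidHom_of_mul_mul_inv_mem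
    (ι.comp (zpowGroupHom s)).range t fun g h => ht_mul g h ▸ ⟨_, rfl⟩
  exact ⟨σ, fun q => ⟨t q, ht_section q, (hσ q).symm⟩⟩

/-- Let `1 → A → Γ → Q → 1` be a short exact sequence of groups with `A`
abelian, and let `Q` act on `A` by conjugation in `Γ` (the representation `ρ` below).
Assume that `H²(Q; A)` is finite and let `s` be an integer with `s ≡ 1 mod |H²(Q; A)|`.
Let `sA := {aˢ : a ∈ A}`, a normal subgroup of `Γ`.  Then the induced short exact sequence
`1 → A/sA → Γ/sA → Q → 1` splits:  there is a homomorphism `σ : Q → Γ/sA` whose composite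
with the projection `Γ/sA → Q` is the identity (i.e. every `σ q` is represented by an
element of `Γ` mapping to `q` under `pr`). -/
theorem induced_extension_splits
    (A Γ Q : Type) [CommGroup A] [Group Γ] [Group Q]
    (ι : A →* Γ) (pr : Γ →* Q)
    (hι : Function.Injective ι) (hpr : Function.Surjective pr)
    (hexact : pr.ker = ι.range)
    (ρ : Representation ℤ Q (Additive A))
    (hρ : ∀ (γ : Γ) (a : A),
      ι (Additive.toMul (ρ (pr γ) (Additive.ofMul a))) = γ * ι a * γ⁻¹)
    (hfin : Finite (groupCohomology (Rep.of ρ) 2))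
    (s : ℤ) (hs : s ≡ 1 [ZMOD (Nat.card (groupCohomology (Rep.of ρ) 2) : ℤ)])
    [hN : ((ι.comp (zpowGroupHom s)).range).Normal] :
    ∃ σ : Q →* Γ ⧸ (ι.comp (zpowGroupHom s)).range,
      ∀ q : Q, ∃ γ : Γ, pr γ = q ∧
        (QuotientGroup.mk γ : Γ ⧸ (ι.comp (zpowGroupHom s)).range) = σ q :=
  induced_extension_splits_general A Γ Q ι pr hι hpr hexact ρ hρ s hs (hN := hN)
end

section
/- Let M ∈ GLₙ(ℤ), let s be a natural number, let r' be a multiple of the order of the reduction M_s ∈ GLₙ(ℤ/s) of M modulo s, and set r := r'·s. Let C be a cyclic subgroup of (ℤ/s)ⁿ ⋊_{M_s} ℤ/r whose intersection with (ℤ/s)ⁿ is nontrivial. Then there exist a prime p and a natural number N ≥ 1 such that: (1) p^N divides r = r'·s; (2) p^N does not divide the order of pr_{r,s}(C); and (3) p divides the order of C ∩ (ℤ/s)ⁿ. -/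
open Multiplicative

/-- The reduction `M_s ∈ GLₙ(ℤ/s)` of a matrix `M ∈ GLₙ(ℤ)` modulo `s`. -/
def glReduction (n s : ℕ) (M : GL (Fin n) ℤ) : GL (Fin n) (ZMod s) :=
  Matrix.GeneralLinearGroup.map (Int.castRingHom (ZMod s)) M

/-- The automorphism of `(ℤ/s)ⁿ` (written multiplicatively) given by the matrix
`M_s ∈ GLₙ(ℤ/s)`. -/
def glAut (n s : ℕ) (M : GL (Fin n) ℤ) : MulAut (Multiplicative (Fin n → ZMod s)) :=
  AddEquiv.toMultiplicative
    (((LinearMap.GeneralLinearGroup.generalLinearEquiv (ZMod s) (Fin n → ZMod s))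
        (Matrix.GeneralLinearGroup.toLin (glReduction n s M))).toAddEquiv)

/-- The action of `ℤ/r` on `(ℤ/s)ⁿ` in which the fixed generator `1` of `ℤ/r` acts by the
reduction `M_s` of `M` modulo `s` (assuming the order of `M_s` divides `r`). -/
noncomputable def glTwist (n s r : ℕ) (M : GL (Fin n) ℤ) :
    Multiplicative (ZMod r) →* MulAut (Multiplicative (Fin n → ZMod s)) :=
  zmodPowHom r (glAut n s M)

/-- The semidirect product `(ℤ/s)ⁿ ⋊_{M_s} ℤ/r`. -/
noncomputable def MatSdp (n s r : ℕ) (M : GL (Fin n) ℤ) : Type :=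
  Multiplicative (Fin n → ZMod s) ⋊[glTwist n s r M] Multiplicative (ZMod r)

noncomputable instance (n s r : ℕ) (M : GL (Fin n) ℤ) : Group (MatSdp n s r M) :=
  inferInstanceAs (Group (Multiplicative (Fin n → ZMod s) ⋊[glTwist n s r M]
    Multiplicative (ZMod r)))

/-- The copy of `(ℤ/s)ⁿ` inside `(ℤ/s)ⁿ ⋊_{M_s} ℤ/r`. -/
noncomputable def MatSdp.A (n s r : ℕ) (M : GL (Fin n) ℤ) : Subgroup (MatSdp n s r M) :=
  (SemidirectProduct.inl (φ := glTwist n s r M)).range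

/-- The element of `(ℤ/s)ⁿ ⋊_{M_s} ℤ/r` given by `v ∈ (ℤ/s)ⁿ`. -/
noncomputable def MatSdp.inlV (n s r : ℕ) (M : GL (Fin n) ℤ) (v : Fin n → ZMod s) :
    MatSdp n s r M :=
  SemidirectProduct.inl (ofAdd v)

/-- The canonical projection `pr_{r,s} : (ℤ/s)ⁿ ⋊_{M_s} ℤ/r → ℤ/r`. -/
noncomputable def MatSdp.pr (n s r : ℕ) (M : GL (Fin n) ℤ) :
    MatSdp n s r M →* Multiplicative (ZMod r) :=
  SemidirectProduct.rightHom

/-- The fixed generator `t` of `ℤ/r` inside `(ℤ/s)ⁿ ⋊_{M_s} ℤ/r`. -/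
noncomputable def MatSdp.t (n s r : ℕ) (M : GL (Fin n) ℤ) : MatSdp n s r M :=
  SemidirectProduct.inr (ofAdd (1 : ZMod r))

/-!
`C ∩ (ℤ/s)ⁿ` is the kernel of `pr_{r,s}` restricted to `C`, so
`|C| = |C ∩ (ℤ/s)ⁿ| · |pr_{r,s}(C)|`.
Every element of the semidirect product has order dividing `r = r' · s`: its `r'`-th power
lies in the part where `ℤ/r` acts trivially, and there `(ℤ/s)ⁿ` has exponent `s`. Hence
`|C| ∣ r`, and it suffices to take a prime `p ∣ |C ∩ (ℤ/s)ⁿ|` and `N` one more than the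
`p`-adic valuation of `|pr_{r,s}(C)|`. This needs `pr_{r,s}(C)` finite, which also holds when
`r = 0`: some nonzero power of a generator of `C` lies in the kernel.
-/

lemma zmodPowHom_mem_zpowers {G : Type*} [Group G] (r : ℕ) (g : G)
    (x : Multiplicative (ZMod r)) : zmodPowHom r g x ∈ Subgroup.zpowers g := by
  unfold zmodPowHom
  split_ifs
  · obtain ⟨k, rfl⟩ : ∃ k : ℤ, x = ofAdd (k : ZMod r) := ⟨x.toAdd.cast, by simp⟩
    refine ⟨k, ?_⟩
    change _ = Additive.toMul (ZMod.lift r _ (toAdd (ofAdd (k : ZMod r))))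
    rw [toAdd_ofAdd, ZMod.lift_coe]
    rfl
  · exact Subgroup.one_mem _

def glToMulAut (n : ℕ) (R : Type*) [CommRing R] :
    GL (Fin n) R →* MulAut (Multiplicative (Fin n → R)) where
  toFun A := AddEquiv.toMultiplicative
    (((LinearMap.GeneralLinearGroup.generalLinearEquiv R (Fin n → R))
        (Matrix.GeneralLinearGroup.toLin A)).toAddEquiv)
  map_one' := by ext; simp
  map_mul' _ _ := by ext; simp

lemma glAut_eq_glToMulAut (n s : ℕ) (M : GL (Fin n) ℤ) :
    glAut n s M = glToMulAut n (ZMod s) (glReduction n s M) :=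
  rfl

lemma glTwist_pow_eq_one {n s r r' : ℕ} {M : GL (Fin n) ℤ}
    (hr' : orderOf (glReduction n s M) ∣ r') (x : Multiplicative (ZMod r)) :
    glTwist n s r M x ^ r' = 1 := by
  have hAut : orderOf (glAut n s M) ∣ orderOf (glReduction n s M) := by
    rw [glAut_eq_glToMulAut]
    exact orderOf_map_dvd _ _
  exact orderOf_dvd_iff_pow_eq_one.mp <|
    (orderOf_dvd_of_mem_zpowers (zmodPowHom_mem_zpowers r _ x)).trans (hAut.trans hr')

namespace SemidirectProduct

variable {N H : Type*} [Group N] [Group H] {φ : H →* MulAut N}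

lemma left_pow_of_map_right_eq_one {g : N ⋊[φ] H} (hg : φ g.right = 1) (k : ℕ) :
    (g ^ k).left = g.left ^ k := by
  induction k with
  | zero => rw [pow_zero, pow_zero, one_left]
  | succ k ih =>
    have hright : (g ^ k).right = g.right ^ k := map_pow rightHom g k
    rw [pow_succ, mul_left, ih, hright, map_pow, hg, one_pow, MulAut.one_apply, pow_succ]

lemma pow_mul_eq_one {a b : ℕ} (hφ : ∀ h, φ h ^ a = 1) (hN : ∀ x : N, x ^ b = 1)
    (hH : ∀ h : H, h ^ (a * b) = 1) (g : N ⋊[φ] H) : g ^ (a * b) = 1 := by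
  have hga : φ (g ^ a).right = 1 := by
    rw [← rightHom_eq_right, map_pow, map_pow]
    exact hφ _
  ext
  · rw [pow_mul, left_pow_of_map_right_eq_one hga, hN, one_left]
  · rw [← rightHom_eq_right, map_pow, hH, map_one]

end SemidirectProduct

lemma Multiplicative.zmod_pow_eq_one (m : ℕ) (x : Multiplicative (ZMod m)) : x ^ m = 1 :=
  Multiplicative.toAdd.injective (by simp)

lemma Multiplicative.zmod_pi_pow_eq_one (n m : ℕ) (x : Multiplicative (Fin n → ZMod m)) :
    x ^ m = 1 := by
  ext i
  simp

lemma MatSdp.pow_eq_one {n s r' : ℕ} {M : GL (Fin n) ℤ}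
    (hr' : orderOf (glReduction n s M) ∣ r') (g : MatSdp n s (r' * s) M) : g ^ (r' * s) = 1 :=
  SemidirectProduct.pow_mul_eq_one (glTwist_pow_eq_one hr') (Multiplicative.zmod_pi_pow_eq_one n s)
    (Multiplicative.zmod_pow_eq_one _) g

lemma Subgroup.card_inf_ker_mul_card_map {G H : Type*} [Group G] [Group H]
    (C : Subgroup G) (f : G →* H) :
    Nat.card ↥(C ⊓ f.ker) * Nat.card (C.map f) = Nat.card C := by
  rw [← (f.domRestrict C).ker.card_mul_index, Subgroup.index_ker, MonoidHom.domRestrict_range,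
    MonoidHom.ker_domRestrict, ← Subgroup.inf_subgroupOf_left,
    Nat.card_congr (Subgroup.subgroupOfEquivOfLe inf_le_left).toEquiv]

lemma Subgroup.card_map_ne_zero_of_inf_ker_ne_bot {G H : Type*} [Group G] [Group H]
    {C : Subgroup G} (hC : IsCyclic C) {f : G →* H} (hCf : C ⊓ f.ker ≠ ⊥) :
    Nat.card (C.map f) ≠ 0 := by
  obtain ⟨g, rfl⟩ := (Subgroup.isCyclic_iff_exists_zpowers_eq_top C).mp hC
  obtain ⟨x, ⟨⟨k, rfl⟩, hfx⟩, hx⟩ := (Subgroup.bot_or_exists_ne_one _).resolve_left hCf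
  have hk : k ≠ 0 := by rintro rfl; exact hx (zpow_zero g)
  have hfg : IsOfFinOrder (f g) :=
    isOfFinOrder_iff_zpow_eq_one.mpr ⟨k, hk, by rwa [← map_zpow]⟩
  rw [MonoidHom.map_zpowers, Nat.card_zpowers]
  exact hfg.orderOf_pos.ne'

lemma Nat.exists_prime_pow_dvd_not_dvd_of_mul_dvd {k q m : ℕ} (hkq : k * q ∣ m) (hk : k ≠ 1)
    (hq : q ≠ 0) :
    ∃ p N : ℕ, p.Prime ∧ 1 ≤ N ∧ p ^ N ∣ m ∧ ¬ p ^ N ∣ q ∧ p ∣ k := by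
  have hp := Nat.minFac_prime hk
  refine ⟨k.minFac, q.factorization k.minFac + 1, hp, le_add_self, ?_, ?_, k.minFac_dvd⟩
  · rw [pow_succ']
    exact (mul_dvd_mul k.minFac_dvd (Nat.ordProj_dvd q _)).trans hkq
  · rw [hp.pow_dvd_iff_le_factorization hq]
    omega

/-- Let `M ∈ GLₙ(ℤ)`, let `s` be a natural number, let `r'` be a multiple
of the order of the reduction `M_s ∈ GLₙ(ℤ/s)` of `M` modulo `s`, and set `r := r' · s`.
Let `C` be a cyclic subgroup of `(ℤ/s)ⁿ ⋊_{M_s} ℤ/r` whose intersection with `(ℤ/s)ⁿ` is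
nontrivial.  Then there exist a prime `p` and a natural number `N ≥ 1` such that
(1) `p^N` divides `r = r'·s`;  (2) `p^N` does not divide the order of `pr_{r,s}(C)`; and
(3) `p` divides the order of `C ∩ (ℤ/s)ⁿ`. -/
theorem exists_prime_power_of_cyclic_subgroup
    (n s r' : ℕ) (M : GL (Fin n) ℤ)
    (hr' : orderOf (glReduction n s M) ∣ r')
    (C : Subgroup (MatSdp n s (r' * s) M))
    (hC : IsCyclic C)
    (hCA : C ⊓ MatSdp.A n s (r' * s) M ≠ ⊥) :
    ∃ (p N : ℕ), p.Prime ∧ 1 ≤ N ∧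
      p ^ N ∣ r' * s ∧
      ¬ p ^ N ∣ Nat.card (Subgroup.map (MatSdp.pr n s (r' * s) M) C) ∧
      p ∣ Nat.card ↥(C ⊓ MatSdp.A n s (r' * s) M) := by
  have hA : MatSdp.A n s (r' * s) M = (MatSdp.pr n s (r' * s) M).ker :=
    SemidirectProduct.range_inl_eq_ker_rightHom
  rw [hA] at hCA ⊢
  have hCr : Nat.card C ∣ r' * s := by
    rw [← hC.exponent_eq_card]
    exact Monoid.exponent_dvd_of_forall_pow_eq_one fun g => Subtype.ext (MatSdp.pow_eq_one hr' g)
  refine Nat.exists_prime_pow_dvd_not_dvd_of_mul_dvd ?_ ?_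
    (Subgroup.card_map_ne_zero_of_inf_ker_ne_bot hC hCA)
  · rwa [C.card_inf_ker_mul_card_map]
  · rwa [ne_eq, Subgroup.card_eq_one]
end

section
/- Let M ∈ GLₙ(ℤ). If M is cyclic-good, then M is hyper-good. -/
open Multiplicative

/-- A (finite) group `H` is *`p`-hyperelementary* for a prime `p` if there is a short exact
sequence `1 → C → H → P → 1` with `C` a normal cyclic subgroup of order prime to `p` and
`P = H/C` a `p`-group (the latter condition being expressed by saying that every element of
`H` has a `p`-power power lying in `C`);  `H` is *hyperelementary* if it is
`p`-hyperelementary for some prime `p`. -/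
def IsHyperelementary (H : Type*) [Group H] : Prop :=
  ∃ p : ℕ, p.Prime ∧
    ∃ C : Subgroup H, C.Normal ∧ IsCyclic C ∧ Nat.Coprime (Nat.card C) p ∧
      ∀ h : H, ∃ m : ℕ, h ^ (p ^ m) ∈ C

/-- `M ∈ GLₙ(ℤ)` is *cyclic-good* if for all positive integers `o` and `ν` there are primes
`p₁ ≠ p₂` with `pᵢ ≡ 1 mod o` and `pᵢ ≥ ν`, such that, setting `s := p₁p₂` and
`r := s·|GLₙ(ℤ/s)|`, every cyclic subgroup `C` of `(ℤ/s)ⁿ ⋊_{M_s} ℤ/r` satisfies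
(a) `C ∩ (ℤ/s)ⁿ = {0}`, or (b) there is `i ∈ {1,2}` such that `pᵢ` divides both `|C|` and
`[ℤ/r : pr_{r,s}(C)]`. -/
noncomputable def CyclicGood (n : ℕ) (M : GL (Fin n) ℤ) : Prop :=
  ∀ o ν : ℕ, 0 < o → 0 < ν →
    ∃ p₁ p₂ : ℕ, p₁.Prime ∧ p₂.Prime ∧ p₁ ≠ p₂ ∧
      p₁ ≡ 1 [MOD o] ∧ p₂ ≡ 1 [MOD o] ∧ ν ≤ p₁ ∧ ν ≤ p₂ ∧
      ∀ C : Subgroup (MatSdp n (p₁ * p₂)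
          (p₁ * p₂ * Nat.card (GL (Fin n) (ZMod (p₁ * p₂)))) M),
        IsCyclic C →
          C ⊓ MatSdp.A n (p₁ * p₂) (p₁ * p₂ * Nat.card (GL (Fin n) (ZMod (p₁ * p₂)))) M = ⊥
          ∨ (p₁ ∣ Nat.card C ∧
              p₁ ∣ (Subgroup.map (MatSdp.pr n (p₁ * p₂)
                (p₁ * p₂ * Nat.card (GL (Fin n) (ZMod (p₁ * p₂)))) M) C).index)
          ∨ (p₂ ∣ Nat.card C ∧
              p₂ ∣ (Subgroup.map (MatSdp.pr n (p₁ * p₂)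
                (p₁ * p₂ * Nat.card (GL (Fin n) (ZMod (p₁ * p₂)))) M) C).index)

/-- `M ∈ GLₙ(ℤ)` is *hyper-good* if for all positive integers `o` and `ν` there are natural
numbers `s` and `r` such that `s ≡ 1 mod o`, the order of `GLₙ(ℤ/s)` divides `r`, and every
hyperelementary subgroup `H` of `(ℤ/s)ⁿ ⋊_{M_s} ℤ/r` satisfies at least one of:
(a) there is a natural number `k` dividing `s` with `k ≡ 1 mod o`, `k ≥ ν` and
`H ∩ (ℤ/s)ⁿ ⊆ k·(ℤ/s)ⁿ`;  (b) `[ℤ/r : pr_{r,s}(H)] ≥ ν`. -/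
noncomputable def HyperGood (n : ℕ) (M : GL (Fin n) ℤ) : Prop :=
  ∀ o ν : ℕ, 0 < o → 0 < ν →
    ∃ s r : ℕ, s ≡ 1 [MOD o] ∧ Nat.card (GL (Fin n) (ZMod s)) ∣ r ∧
      ∀ H : Subgroup (MatSdp n s r M), IsHyperelementary H →
        (∃ k : ℕ, k ∣ s ∧ k ≡ 1 [MOD o] ∧ ν ≤ k ∧
            ∀ v : Fin n → ZMod s, MatSdp.inlV n s r M v ∈ H →
              ∃ w : Fin n → ZMod s, v = k • w)
        ∨ ν ≤ (Subgroup.map (MatSdp.pr n s r M) H).index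

/-!
Let `C ≤ H` be the cyclic subgroup of the hyperelementary group `H` with `H/C` a `p`-group, and
apply cyclic-goodness to `C`. If `C ∩ (ℤ/s)ⁿ` is trivial, every `v ∈ H ∩ (ℤ/s)ⁿ` is killed by a
power of `p`, hence divisible by whichever `pᵢ` differs from `p`. Otherwise some `pᵢ` divides
`|C|`, so `pᵢ ≠ p`, and `pᵢ` divides `[ℤ/r : pr C] = [pr H : pr C]·[ℤ/r : pr H]`; since
`pr H / pr C` is a `p`-group, `pᵢ` divides `[ℤ/r : pr H]`, which is therefore at least `ν`.
-/

theorem exists_eq_nsmul_of_coprime {A : Type*} [AddCommGroup A] {k m : ℕ} (hkm : k.Coprime m)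
    {v : A} (hv : m • v = 0) : ∃ w, v = k • w := by
  refine ⟨Nat.gcdA k m • v, ?_⟩
  have hbezout : (1 : ℤ) = k * Nat.gcdA k m + m * Nat.gcdB k m := by
    rw [← Nat.gcd_eq_gcd_ab, hkm.gcd_eq_one, Nat.cast_one]
  calc v = (1 : ℤ) • v := (one_zsmul v).symm
    _ = k • Nat.gcdA k m • v + Nat.gcdB k m • m • v := by
      rw [hbezout, add_zsmul, mul_zsmul, mul_comm (m : ℤ), mul_zsmul, natCast_zsmul, natCast_zsmul]
    _ = k • Nat.gcdA k m • v := by rw [hv, zsmul_zero, add_zero]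

theorem Subgroup.isPGroup_quotient_subgroupOf {G : Type*} [CommGroup G] {p : ℕ}
    {L K : Subgroup G} (h : ∀ x ∈ K, ∃ m : ℕ, x ^ p ^ m ∈ L) :
    IsPGroup p (K ⧸ L.subgroupOf K) := by
  rintro ⟨x⟩
  obtain ⟨m, hm⟩ := h x x.2
  exact ⟨m, (QuotientGroup.eq_one_iff _).mpr hm⟩

theorem Subgroup.prime_dvd_index_of_pow_mem {G : Type*} [CommGroup G] [Finite G] {p q : ℕ}
    [Fact p.Prime] (hq : q.Prime) (hqp : q ≠ p) {L K : Subgroup G} (hLK : L ≤ K)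
    (h : ∀ x ∈ K, ∃ m : ℕ, x ^ p ^ m ∈ L) (hL : q ∣ L.index) : q ∣ K.index := by
  obtain ⟨e, he⟩ := IsPGroup.iff_card.mp (isPGroup_quotient_subgroupOf h)
  have hcop : q.Coprime (p ^ e) :=
    ((Nat.coprime_primes hq Fact.out).mpr hqp).pow_right e
  rw [← relIndex_mul_index hLK, relIndex, index, he] at hL
  exact hcop.dvd_of_dvd_mul_left hL

theorem Subgroup.prime_dvd_index_map_of_pow_mem {G Q : Type*} [Group G] [CommGroup Q] [Finite Q]
    (f : G →* Q) {p q : ℕ} [Fact p.Prime] (hq : q.Prime) (hqp : q ≠ p) {C H : Subgroup G}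
    (hCH : C ≤ H) (h : ∀ x ∈ H, ∃ m : ℕ, x ^ p ^ m ∈ C) (hC : q ∣ (C.map f).index) :
    q ∣ (H.map f).index := by
  refine prime_dvd_index_of_pow_mem hq hqp (map_mono hCH) ?_ hC
  rintro _ ⟨x, hx, rfl⟩
  obtain ⟨m, hm⟩ := h x hx
  exact ⟨m, map_pow f x _ ▸ mem_map_of_mem f hm⟩

theorem IsHyperelementary.exists_le {G : Type*} [Group G] {H : Subgroup G}
    (hH : IsHyperelementary H) :
    ∃ p : ℕ, p.Prime ∧ ∃ C : Subgroup G, C ≤ H ∧ IsCyclic C ∧ (Nat.card C).Coprime p ∧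
      ∀ h ∈ H, ∃ m : ℕ, h ^ p ^ m ∈ C := by
  obtain ⟨p, hp, C, -, hC, hcop, hpow⟩ := hH
  refine ⟨p, hp, C.map H.subtype, Subgroup.map_subtype_le C,
    isCyclic_of_surjective _ (H.subtype.subgroupMap_surjective C),
    by rwa [Subgroup.card_map_of_injective H.subtype_injective], fun h hh => ?_⟩
  obtain ⟨m, hm⟩ := hpow ⟨h, hh⟩
  exact ⟨m, _, hm, rfl⟩

namespace MatSdp

variable {n s r : ℕ} {M : GL (Fin n) ℤ}

theorem inlV_nsmul (m : ℕ) (v : Fin n → ZMod s) :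
    inlV n s r M (m • v) = inlV n s r M v ^ m := by
  rw [inlV, ofAdd_nsmul, map_pow]; rfl

theorem inlV_zero : inlV n s r M 0 = 1 := map_one _

theorem inlV_injective : Function.Injective (inlV n s r M) :=
  SemidirectProduct.inl_injective.comp ofAdd.injective

theorem inlV_mem_A (v : Fin n → ZMod s) : inlV n s r M v ∈ A n s r M := ⟨ofAdd v, rfl⟩

theorem exists_eq_nsmul_of_inf_A_eq_bot {H C : Subgroup (MatSdp n s r M)} {p k : ℕ}
    (hpow : ∀ h ∈ H, ∃ m : ℕ, h ^ p ^ m ∈ C) (hCA : C ⊓ A n s r M = ⊥) (hk : k.Coprime p)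
    {v : Fin n → ZMod s} (hv : inlV n s r M v ∈ H) : ∃ w, v = k • w := by
  obtain ⟨m, hm⟩ := hpow _ hv
  have hA : inlV n s r M (p ^ m • v) ∈ C ⊓ A n s r M := ⟨inlV_nsmul _ v ▸ hm, inlV_mem_A _⟩
  rw [hCA, Subgroup.mem_bot, ← inlV_zero] at hA
  exact exists_eq_nsmul_of_coprime (hk.pow_right m) (inlV_injective hA)

end MatSdp

/-- If `M ∈ GLₙ(ℤ)` is cyclic-good, then `M` is hyper-good. -/
theorem hyperGood_of_cyclicGood (n : ℕ) (M : GL (Fin n) ℤ) (h : CyclicGood n M) :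
    HyperGood n M := by
  intro o ν ho hν
  obtain ⟨p₁, p₂, hp₁, hp₂, hne, hmod₁, hmod₂, hν₁, hν₂, hcyc⟩ := h o ν ho hν
  set s := p₁ * p₂
  set r := s * Nat.card (GL (Fin n) (ZMod s))
  have : NeZero s := ⟨Nat.mul_ne_zero hp₁.ne_zero hp₂.ne_zero⟩
  have : NeZero r := ⟨Nat.mul_ne_zero (NeZero.ne s) Nat.card_pos.ne'⟩
  refine ⟨s, r, by simpa using hmod₁.mul hmod₂, dvd_mul_left _ _, fun H hH => ?_⟩
  obtain ⟨p, hp, C, hCH, hC, hcop, hpow⟩ := hH.exists_le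
  have : Fact p.Prime := ⟨hp⟩
  have hindex : ∀ q, q.Prime → ν ≤ q → q ∣ Nat.card C →
      q ∣ (C.map (MatSdp.pr n s r M)).index → ν ≤ (H.map (MatSdp.pr n s r M)).index := by
    intro q hq hνq hqC hqi
    have hqp : q ≠ p := by
      rintro rfl
      exact hq.one_lt.ne' (Nat.eq_one_of_dvd_coprimes hcop hqC dvd_rfl)
    exact hνq.trans (Nat.le_of_dvd (Nat.pos_of_ne_zero Subgroup.index_ne_zero_of_finite)
      (Subgroup.prime_dvd_index_map_of_pow_mem _ hq hqp hCH hpow hqi))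
  rcases hcyc C hC with hCA | ⟨hqC, hqi⟩ | ⟨hqC, hqi⟩
  · obtain ⟨k, hk, hks, hko, hνk, hkp⟩ :
        ∃ k, k.Prime ∧ k ∣ s ∧ k ≡ 1 [MOD o] ∧ ν ≤ k ∧ k ≠ p := by
      by_cases h₁ : p₁ = p
      · exact ⟨p₂, hp₂, dvd_mul_left _ _, hmod₂, hν₂, h₁ ▸ hne.symm⟩
      · exact ⟨p₁, hp₁, dvd_mul_right _ _, hmod₁, hν₁, h₁⟩
    exact Or.inl ⟨k, hks, hko, hνk, fun v hv => MatSdp.exists_eq_nsmul_of_inf_A_eq_bot hpow hCA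
      ((Nat.coprime_primes hk hp).mpr hkp) hv⟩
  · exact Or.inr (hindex p₁ hp₁ hν₁ hqC hqi)
  · exact Or.inr (hindex p₂ hp₂ hν₂ hqC hqi)
end

section
/- Let 1 → A → Γ →^{pr} Q → 1 be a short exact sequence of groups in which A is free abelian of finite rank, and let any subgroup of Q act on A by conjugation in Γ. Let k be a natural number and let H̄ ⊆ Γ be a subgroup with A ∩ H̄ ⊆ kA, where kA := {a^k : a ∈ A}. Assume that the group cohomology groups H¹(pr(H̄); A) and H²(pr(H̄); A) are finite and that k ≡ 1 mod |Hⁱ(pr(H̄); A)| for i = 1, 2. Let φ : Γ → Γ be a group homomorphism with φ(a) = a^k for all a ∈ A and pr ∘ φ = pr. Then H̄ is subconjugated to the image of φ: there exists γ ∈ Γ with γ H̄ γ⁻¹ ⊆ im(φ). -/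
/-!
For `g ∈ Γ` the element `c g := g φ(g)⁻¹` lies in `A`, since `pr ∘ φ = pr`; `c` is a crossed
homomorphism `Γ → A` equal to `a ↦ a^(1-k)` on `A`, and `g ∈ im φ` as soon as `c g ∈ kA`
(then `g = φ(z g)` for `z^k = c g`).

Choose a section `s` of `pr` over `Q̄ = pr(H̄)` with values in `H̄`. Because `A ∩ H̄ ⊆ kA`,
the cochain `c ∘ s` is a cocycle modulo `k`: its coboundary is `k • E`, and `E` is a 2-cocycle
as `A` is torsion-free. Since `k` acts as the identity on `H²(Q̄; A)`,
`[E] = k[E] = [d(c ∘ s)] = 0`, so `c ∘ s - k • u` is a cocycle for some `u`; since `k` acts as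
the identity on `H¹(Q̄; A)`, that cocycle is a coboundary `d b` modulo `k`. Conjugating by
`b ∈ A` changes `c` on `H̄` by exactly `-d b` modulo `k`, which moves all of `c(H̄)` into `kA`.
-/

theorem nsmul_eq_self_of_modEq_one {B : Type*} [AddGroup B] {k : ℕ}
    (hk : k ≡ 1 [MOD Nat.card B]) (x : B) : k • x = x := by
  rw [← mod_natCard_nsmul, hk, mod_natCard_nsmul, one_nsmul]

namespace groupCohomology

variable {G : Type} [Group G] {M : Rep ℤ G} {k : ℕ}

theorem exists_cocycles₂_d₁₂_eq_nsmul [IsAddTorsionFree M] {f : G → M}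
    (hf : ∀ p, ∃ e, (d₁₂ M).hom f p = k • e) : ∃ E : cocycles₂ M, (d₁₂ M).hom f = k • ⇑E := by
  rcases eq_or_ne k 0 with rfl | hk
  · exact ⟨0, funext fun p => by simpa using hf p⟩
  choose e he using hf
  have hkdE : k • (d₂₃ M).hom e = 0 := by
    rw [← map_nsmul, show k • e = (d₁₂ M).hom f from (funext he).symm]
    exact d₁₂_comp_d₂₃_apply M f
  have hdE : (d₂₃ M).hom e = 0 := by
    funext p
    exact IsAddTorsionFree.nsmul_right_injective hk ((congrFun hkdE p).trans (smul_zero k).symm)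
  exact ⟨⟨e, hdE⟩, funext he⟩

theorem exists_sub_nsmul_mem_cocycles₁ (hH2 : ∀ x : H2 M, k • x = x) {f : G → M}
    {E : cocycles₂ M} (hfE : (d₁₂ M).hom f = k • ⇑E) :
    ∃ u : G → M, f - k • u ∈ cocycles₁ M := by
  have hE : H2π M E = 0 := by
    rw [← hH2 (H2π M E), ← map_nsmul, H2π_eq_zero_iff]
    exact ⟨f, hfE⟩
  obtain ⟨u, hu⟩ := (H2π_eq_zero_iff E).1 hE
  refine ⟨u, ?_⟩
  show (d₁₂ M).hom (f - k • u) = 0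
  rw [map_sub, map_nsmul, hu, hfE, sub_self]

theorem exists_eq_d₀₁_add_nsmul_of_mem_cocycles₁ (hH1 : ∀ x : H1 M, k • x = x) {z : G → M}
    (hz : z ∈ cocycles₁ M) : ∃ (b : M) (w : G → M), z = (d₀₁ M).hom b + k • w := by
  have hkz : H1π M (k • ⟨z, hz⟩ - ⟨z, hz⟩) = 0 := by rw [map_sub, map_nsmul, hH1, sub_self]
  obtain ⟨b, hb⟩ := (H1π_eq_zero_iff _).1 hkz
  refine ⟨-b, z, ?_⟩
  rw [map_neg, hb]
  show z = -(k • z - z) + k • z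
  abel

theorem exists_eq_d₀₁_add_nsmul [IsAddTorsionFree M] (hH1 : k ≡ 1 [MOD Nat.card (H1 M)])
    (hH2 : k ≡ 1 [MOD Nat.card (H2 M)]) {f : G → M} (hf : ∀ p, ∃ e, (d₁₂ M).hom f p = k • e) :
    ∃ (b : M) (w : G → M), f = (d₀₁ M).hom b + k • w := by
  obtain ⟨E, hfE⟩ := exists_cocycles₂_d₁₂_eq_nsmul hf
  obtain ⟨u, hu⟩ := exists_sub_nsmul_mem_cocycles₁ (nsmul_eq_self_of_modEq_one hH2) hfE
  obtain ⟨b, w, hbw⟩ :=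
    exists_eq_d₀₁_add_nsmul_of_mem_cocycles₁ (nsmul_eq_self_of_modEq_one hH1) hu
  exact ⟨b, w + u, by rw [smul_add, ← add_assoc, ← hbw, sub_add_cancel]⟩

end groupCohomology

section PseudoExpansive

variable {A Γ Q : Type} [CommGroup A] [Group Γ] [Group Q] {ι : A →* Γ} {pr : Γ →* Q}
  {ρ : Representation ℤ Q (Additive A)} {φ : Γ →* Γ} {k : ℕ} {c : Γ → Additive A}

theorem exists_displacement (hexact : pr.ker = ι.range) (hφpr : ∀ g, pr (φ g) = pr g) :
    ∃ c : Γ → Additive A, ∀ g, ι (c g).toMul = g * (φ g)⁻¹ := by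
  have hker (g : Γ) : g * (φ g)⁻¹ ∈ ι.range := by
    rw [← hexact, MonoidHom.mem_ker, map_mul, map_inv, hφpr, mul_inv_cancel]
  choose a ha using hker
  exact ⟨fun g => .ofMul (a g), ha⟩

variable (hι : Function.Injective ι)
  (hρ : ∀ γ x, ι (ρ (pr γ) x).toMul = γ * ι x.toMul * γ⁻¹)
  (hφA : ∀ a : A, φ (ι a) = ι (a ^ k)) (hc : ∀ g, ι (c g).toMul = g * (φ g)⁻¹)

include hι hρ hc in
theorem displacement_mul (g h : Γ) : c (g * h) = ρ (pr g) (c h) + c g := by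
  refine Additive.toMul.injective (hι ?_)
  rw [toMul_add, map_mul, hc, hρ, hc, hc, map_mul, mul_inv_rev]
  group

include hι hφA hc in
theorem displacement_ι (x : Additive A) : c (ι x.toMul) = x - k • x := by
  refine Additive.toMul.injective (hι ?_)
  rw [hc, hφA, toMul_sub, toMul_nsmul, map_div, div_eq_mul_inv]

include hι hρ in
theorem representation_pr_ι (a : A) (x : Additive A) : ρ (pr (ι a)) x = x := by
  refine Additive.toMul.injective (hι ?_)
  rw [hρ, ← map_inv, ← map_mul, ← map_mul, mul_inv_cancel_comm]

include hφA hc in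
theorem mem_range_of_displacement_eq_nsmul {g : Γ} {z : Additive A} (h : c g = k • z) :
    g ∈ φ.range :=
  ⟨ι z.toMul * g, by rw [map_mul, hφA, ← toMul_nsmul, ← h, hc, inv_mul_cancel_right]⟩

include hι hρ hφA hc in
theorem displacement_conj (b : Additive A) (h : Γ) :
    c (ι b.toMul * h * (ι b.toMul)⁻¹) = c h - (ρ (pr h) b - b) + k • (ρ (pr h) b - b) := by
  rw [mul_assoc, displacement_mul hι hρ hc, representation_pr_ι hι hρ, displacement_mul hι hρ hc,
    ← map_inv, ← toMul_neg, displacement_ι hι hφA hc, displacement_ι hι hφA hc]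
  simp only [map_sub, map_nsmul, map_neg, smul_sub, smul_neg]
  abel

include hι hρ hφA hc in
theorem exists_displacement_eq_add_nsmul (hexact : pr.ker = ι.range) {H : Subgroup Γ}
    (hH : ∀ a : A, ι a ∈ H → ∃ b : A, a = b ^ k) {g g' : Γ} (hg : g ∈ H) (hg' : g' ∈ H)
    (hpr : pr g = pr g') : ∃ w, c g = c g' + k • w := by
  obtain ⟨a, ha⟩ : g'⁻¹ * g ∈ ι.range := by
    rw [← hexact, MonoidHom.mem_ker, map_mul, map_inv, hpr, inv_mul_cancel]
  obtain ⟨b, rfl⟩ := hH a (ha ▸ H.mul_mem (H.inv_mem hg') hg)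
  refine ⟨ρ (pr g') (.ofMul b - k • .ofMul b), ?_⟩
  rw [← mul_inv_cancel_left g' g, ← ha, displacement_mul hι hρ hc, ← toMul_ofMul (b ^ k),
    displacement_ι hι hφA hc, ofMul_pow, ← smul_sub, map_nsmul, add_comm]

include hι hρ hφA hc in
theorem exists_d₁₂_displacement_comp_eq_nsmul (hexact : pr.ker = ι.range) {H : Subgroup Γ}
    (hH : ∀ a : A, ι a ∈ H → ∃ b : A, a = b ^ k) (s : H.map pr → Γ)
    (hs : ∀ q, s q ∈ H ∧ pr (s q) = q) (p : H.map pr × H.map pr) :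
    ∃ e, (groupCohomology.d₁₂ (Rep.of (ρ.comp (H.map pr).subtype))).hom (c ∘ s) p = k • e := by
  obtain ⟨w, hw⟩ := exists_displacement_eq_add_nsmul hι hρ hφA hc hexact hH
    (H.mul_mem (hs p.1).1 (hs p.2).1) (hs (p.1 * p.2)).1 (by simp [(hs _).2])
  refine ⟨w, ?_⟩
  change ρ p.1 (c (s p.2)) - c (s (p.1 * p.2)) + c (s p.1) = k • w
  rw [← (hs p.1).2, sub_add_eq_add_sub, ← displacement_mul hι hρ hc, hw, add_sub_cancel_left]

end PseudoExpansive

theorem subconjugated_to_image_of_pseudo_expansive_general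
    (m : ℕ) (A Γ Q : Type) [CommGroup A] [Group Γ] [Group Q]
    (hfree : Nonempty (A ≃* Multiplicative (Fin m → ℤ)))
    (ι : A →* Γ) (pr : Γ →* Q)
    (hι : Function.Injective ι)
    (hexact : pr.ker = ι.range)
    (ρ : Representation ℤ Q (Additive A))
    (hρ : ∀ (γ : Γ) (a : A),
      ι (Additive.toMul (ρ (pr γ) (Additive.ofMul a))) = γ * ι a * γ⁻¹)
    (k : ℕ) (Hbar : Subgroup Γ)
    (hHbar : ∀ a : A, ι a ∈ Hbar → ∃ b : A, a = b ^ k)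
    (hk1 : k ≡ 1 [MOD
      Nat.card (groupCohomology (Rep.of (ρ.comp (Subgroup.map pr Hbar).subtype)) 1)])
    (hk2 : k ≡ 1 [MOD
      Nat.card (groupCohomology (Rep.of (ρ.comp (Subgroup.map pr Hbar).subtype)) 2)])
    (φ : Γ →* Γ)
    (hφA : ∀ a : A, φ (ι a) = ι (a ^ k))
    (hφpr : ∀ g : Γ, pr (φ g) = pr g) :
    ∃ γ : Γ, ∀ h ∈ Hbar, γ * h * γ⁻¹ ∈ φ.range := by
  obtain ⟨e⟩ := hfree
  have : IsMulTorsionFree A := Function.Injective.isMulTorsionFree e.toMonoidHom e.injective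
  obtain ⟨c, hc⟩ := exists_displacement hexact hφpr
  have hρ' : ∀ γ (x : Additive A), ι (ρ (pr γ) x).toMul = γ * ι x.toMul * γ⁻¹ :=
    fun γ x => hρ γ x.toMul
  choose s hs using fun q : Hbar.map pr => q.2
  obtain ⟨b, w, hbw⟩ := groupCohomology.exists_eq_d₀₁_add_nsmul hk1 hk2
    (exists_d₁₂_displacement_comp_eq_nsmul hι hρ' hφA hc hexact hHbar s hs)
  refine ⟨ι (Additive.toMul (α := A) b), fun h hh => ?_⟩
  set q : Hbar.map pr := ⟨pr h, h, hh, rfl⟩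
  obtain ⟨w', hw'⟩ := exists_displacement_eq_add_nsmul hι hρ' hφA hc hexact hHbar hh (hs q).1
    (hs q).2.symm
  have hcq : c (s q) = ρ (pr h) b - b + k • w q := congrFun hbw q
  refine mem_range_of_displacement_eq_nsmul hφA hc (z := w q + w' + (ρ (pr h) b - b)) ?_
  rw [displacement_conj hι hρ' hφA hc, hw', hcq]
  simp only [smul_add]
  abel

/-- Let `1 → A → Γ →^{pr} Q → 1` be a short exact sequence of groups with
`A` free abelian of finite rank, and let subgroups of `Q` act on `A` by conjugation in `Γ`
(the representation `ρ` below, restricted to subgroups).  Let `k` be a natural number and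
`H̄ ⊆ Γ` a subgroup with `A ∩ H̄ ⊆ kA`.  Assume `H¹(pr(H̄); A)` and `H²(pr(H̄); A)` are
finite and `k ≡ 1 mod |Hⁱ(pr(H̄); A)|` for `i = 1, 2`.  Let `φ : Γ → Γ` be a group
homomorphism with `φ(a) = a^k` for all `a ∈ A` and `pr ∘ φ = pr`.  Then `H̄` is
subconjugated to `im(φ)`. -/
theorem subconjugated_to_image_of_pseudo_expansive
    (m : ℕ) (A Γ Q : Type) [CommGroup A] [Group Γ] [Group Q]
    (hfree : Nonempty (A ≃* Multiplicative (Fin m → ℤ)))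
    (ι : A →* Γ) (pr : Γ →* Q)
    (hι : Function.Injective ι) (hpr : Function.Surjective pr)
    (hexact : pr.ker = ι.range)
    (ρ : Representation ℤ Q (Additive A))
    (hρ : ∀ (γ : Γ) (a : A),
      ι (Additive.toMul (ρ (pr γ) (Additive.ofMul a))) = γ * ι a * γ⁻¹)
    (k : ℕ) (Hbar : Subgroup Γ)
    (hHbar : ∀ a : A, ι a ∈ Hbar → ∃ b : A, a = b ^ k)
    (h1fin : Finite (groupCohomology (Rep.of (ρ.comp (Subgroup.map pr Hbar).subtype)) 1))
    (h2fin : Finite (groupCohomology (Rep.of (ρ.comp (Subgroup.map pr Hbar).subtype)) 2))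
    (hk1 : k ≡ 1 [MOD
      Nat.card (groupCohomology (Rep.of (ρ.comp (Subgroup.map pr Hbar).subtype)) 1)])
    (hk2 : k ≡ 1 [MOD
      Nat.card (groupCohomology (Rep.of (ρ.comp (Subgroup.map pr Hbar).subtype)) 2)])
    (φ : Γ →* Γ)
    (hφA : ∀ a : A, φ (ι a) = ι (a ^ k))
    (hφpr : ∀ g : Γ, pr (φ g) = pr g) :
    ∃ γ : Γ, ∀ h ∈ Hbar, γ * h * γ⁻¹ ∈ φ.range :=
  subconjugated_to_image_of_pseudo_expansive_general m A Γ Q hfree ι pr hι hexact ρ hρ k Hbar hHbar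
    hk1 hk2 φ hφA hφpr
end

section
/- Let G be a group and let A and A' be two normal subgroups of G such that each of A and A' is of finite index in G, is free abelian of finite rank, and is equal to its own centralizer in G. Then A = A'. In particular, such a subgroup A is a characteristic subgroup of G: every automorphism of G maps A onto A. -/
/-- Unique `k`-th roots in a free abelian group. -/
lemma aux_pow_inj {H : Type*} [Group H] {n : ℕ}
    (e : H ≃* Multiplicative (Fin n → ℤ)) {k : ℕ} (hk : k ≠ 0)
    {x y : H} (h : x ^ k = y ^ k) : x = y := by
  apply e.injective
  have : e x ^ k = e y ^ k := by rw [← map_pow, ← map_pow, h]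
  have h2 : (k : ℤ) • Multiplicative.toAdd (e x) = (k : ℤ) • Multiplicative.toAdd (e y) := by
    have := congrArg Multiplicative.toAdd this
    simpa [toAdd_pow, ← natCast_zsmul] using this
  have := smul_right_injective (Fin n → ℤ) (by exact_mod_cast hk) h2
  exact Multiplicative.toAdd.injective this

lemma aux_le {G : Type*} [Group G] (A A' : Subgroup G) [A.Normal] [A'.Normal]
    (hAfin : A.FiniteIndex)
    (hAfree : ∃ n : ℕ, Nonempty (A ≃* Multiplicative (Fin n → ℤ)))
    (hA'free : ∃ n : ℕ, Nonempty (A' ≃* Multiplicative (Fin n → ℤ)))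
    (hA'cent : Subgroup.centralizer (A' : Set G) = A') : A ≤ A' := by
  obtain ⟨n, ⟨e⟩⟩ := hAfree
  obtain ⟨m, ⟨e'⟩⟩ := hA'free
  -- A is commutative
  have hAcomm : ∀ x y : G, x ∈ A → y ∈ A → x * y = y * x := by
    intro x y hx hy
    have : (⟨x, hx⟩ * ⟨y, hy⟩ : A) = ⟨y, hy⟩ * ⟨x, hx⟩ := by
      apply e.injective
      rw [map_mul, map_mul, mul_comm]
    exact congrArg Subtype.val this
  intro a ha
  rw [← hA'cent]
  rw [Subgroup.mem_centralizer_iff]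
  intro x hx
  set k := A.index with hkdef
  have hk : k ≠ 0 := hAfin.index_ne_zero
  have hxk : x ^ k ∈ A := Subgroup.pow_index_mem A x
  have hconj : a * x * a⁻¹ ∈ A' := Subgroup.Normal.conj_mem ‹A'.Normal› x hx a
  have key : (⟨a * x * a⁻¹, hconj⟩ : A') ^ k = (⟨x, hx⟩ : A') ^ k := by
    apply Subtype.ext
    simp only [SubmonoidClass.coe_pow]
    rw [conj_pow, hAcomm a (x ^ k) ha hxk, mul_inv_cancel_right]
  have := aux_pow_inj e' hk key
  have h2 : a * x * a⁻¹ = x := congrArg Subtype.val this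
  have h3 : a * x = x * a := by
    have := congrArg (· * a) h2
    simpa [mul_assoc] using this
  exact h3.symm

/-- Let `G` be a group and let `A`, `A'` be two normal subgroups of `G` such
that each of them is of finite index in `G`, is free abelian of finite rank, and is equal to
its own centralizer in `G`.  Then `A = A'`;  in particular, such a subgroup `A` is a
characteristic subgroup of `G`. -/
theorem translation_subgroup_unique_and_characteristic
    (G : Type*) [Group G] (A A' : Subgroup G) [A.Normal] [A'.Normal]
    (hAfin : A.FiniteIndex) (hA'fin : A'.FiniteIndex)
    (hAfree : ∃ n : ℕ, Nonempty (A ≃* Multiplicative (Fin n → ℤ)))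
    (hA'free : ∃ n : ℕ, Nonempty (A' ≃* Multiplicative (Fin n → ℤ)))
    (hAcent : Subgroup.centralizer (A : Set G) = A)
    (hA'cent : Subgroup.centralizer (A' : Set G) = A') :
    A = A' ∧ A.Characteristic := by
  have main : A = A' := le_antisymm
    (aux_le A A' hAfin hAfree hA'free hA'cent)
    (aux_le A' A hA'fin hA'free hAfree hAcent)
  refine ⟨main, ?_⟩
  constructor
  intro φ
  set B := A.comap φ.toMonoidHom with hB
  have hBnormal : B.Normal := Subgroup.Normal.comap ‹A.Normal› _
  have hBfin : B.FiniteIndex := by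
    constructor
    rw [Subgroup.index_comap_of_surjective _ φ.surjective]
    exact hAfin.index_ne_zero
  have hBequivA : B ≃* A := by
    refine (φ.subgroupMap B).trans (MulEquiv.subgroupCongr ?_)
    exact Subgroup.map_comap_eq_self_of_surjective φ.surjective A
  have hBfree : ∃ n : ℕ, Nonempty (B ≃* Multiplicative (Fin n → ℤ)) := by
    obtain ⟨n, ⟨e⟩⟩ := hAfree
    exact ⟨n, ⟨hBequivA.trans e⟩⟩
  have hBcent : Subgroup.centralizer (B : Set G) = B := by
    ext g
    rw [Subgroup.mem_centralizer_iff]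
    constructor
    · intro h
      have : φ g ∈ Subgroup.centralizer (A : Set G) := by
        rw [Subgroup.mem_centralizer_iff]
        intro a haA
        have : (φ.symm a) * g = g * (φ.symm a) := h _ (by
          simp [hB, Subgroup.mem_comap, haA])
        have := congrArg φ this
        simpa [map_mul] using this
      rw [hAcent] at this
      exact this
    · intro hg h hh
      have hhA : φ h ∈ A := by simpa [hB, Subgroup.mem_comap] using hh
      have hgA : φ g ∈ A := by simpa [hB, Subgroup.mem_comap] using hg
      have hAcomm : ∀ x y : G, x ∈ A → y ∈ A → x * y = y * x := by
        obtain ⟨n, ⟨e⟩⟩ := hAfree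
        intro x y hx hy
        have : (⟨x, hx⟩ * ⟨y, hy⟩ : A) = ⟨y, hy⟩ * ⟨x, hx⟩ := by
          apply e.injective
          rw [map_mul, map_mul, mul_comm]
        exact congrArg Subtype.val this
      have : φ h * φ g = φ g * φ h := hAcomm _ _ hhA hgA
      apply φ.injective
      simpa [map_mul] using this
  haveI := hBnormal
  have : B = A' := le_antisymm
    (aux_le B A' hBfin hBfree hA'free hA'cent)
    (aux_le A' B hA'fin hA'free hBfree hBcent)
  rw [this, ← main]
end
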